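/- arXiv:2305.11136 — 11 statements merged into one kernel-verified Lean document; each statement's English description precedes it below -/
import Mathlib

section
/- Let A be an n × n real matrix that is Metzler, i.e., all off-diagonal entries of A are nonnegative. Then for every t ≥ 0, every entry of the matrix exponential exp(tA) is nonnegative. -/
/-!
Adding `c • 1` to a Metzler matrix `A`, with `c` large, makes it entrywise nonnegative, and the
exponential of a nonnegative matrix is nonnegative since every term of its series is. As `c • 1`
is central, `exp (A + c • 1) = e ^ c • exp A`, so `exp A` is nonnegative as well.
-/

open Matrix

namespace Matrix

def IsMetzler {ι α : Type*} [Zero α] [LE α] (A : Matrix ι ι α) : Prop :=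
  ∀ i j, i ≠ j → 0 ≤ A i j

theorem IsMetzler.smul {ι : Type*} {A : Matrix ι ι ℝ} (hA : A.IsMetzler) {t : ℝ} (ht : 0 ≤ t) :
    (t • A).IsMetzler :=
  fun i j hij => mul_nonneg ht (hA i j hij)

variable {ι : Type*} [Fintype ι] [DecidableEq ι]

theorem hasSum_expSeries (B : Matrix ι ι ℝ) :
    HasSum (fun n : ℕ => (n.factorial⁻¹ : ℝ) • B ^ n) (NormedSpace.exp B) := by
  let _ : NormedRing (Matrix ι ι ℝ) := Matrix.linftyOpNormedRing
  let _ : NormedAlgebra ℝ (Matrix ι ι ℝ) := Matrix.linftyOpNormedAlgebra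
  exact NormedSpace.exp_series_hasSum_exp' B

theorem exp_apply_nonneg {B : Matrix ι ι ℝ} (hB : ∀ i j, 0 ≤ B i j) (i j : ι) :
    0 ≤ NormedSpace.exp B i j :=
  hasSum_le (fun n => mul_nonneg (by positivity) (pow_apply_nonneg hB n i j)) hasSum_zero
    (Pi.hasSum.mp (Pi.hasSum.mp (hasSum_expSeries B) i) j)

theorem exp_algebraMap (c : ℝ) :
    NormedSpace.exp (algebraMap ℝ (Matrix ι ι ℝ) c) = algebraMap ℝ _ (Real.exp c) := by
  let _ : NormedRing (Matrix ι ι ℝ) := Matrix.linftyOpNormedRing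
  let _ : NormedAlgebra ℝ (Matrix ι ι ℝ) := Matrix.linftyOpNormedAlgebra
  rw [Real.exp_eq_exp_ℝ]
  exact (NormedSpace.algebraMap_exp_comm c).symm

theorem exp_add_algebraMap (A : Matrix ι ι ℝ) (c : ℝ) :
    NormedSpace.exp (A + algebraMap ℝ _ c) = Real.exp c • NormedSpace.exp A := by
  rw [exp_add_of_commute _ _ (Algebra.commutes c A).symm, exp_algebraMap, ← Algebra.commutes,
    Algebra.smul_def]

namespace IsMetzler

variable {A : Matrix ι ι ℝ}

theorem add_algebraMap_nonneg (hA : A.IsMetzler) (i j : ι) :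
    0 ≤ (A + algebraMap ℝ _ (∑ k, |A k k|)) i j := by
  rw [add_apply, algebraMap_matrix_apply]
  by_cases hij : i = j
  · subst hij
    have hdiag : |A i i| ≤ ∑ k, |A k k| :=
      Finset.single_le_sum (fun k _ => abs_nonneg (A k k)) (Finset.mem_univ i)
    simp only [if_true, Algebra.algebraMap_self, RingHom.id_apply]
    linarith [neg_abs_le (A i i)]
  · simpa [hij] using hA i j hij

theorem exp_apply_nonneg (hA : A.IsMetzler) (i j : ι) : 0 ≤ NormedSpace.exp A i j := by
  have hexp : NormedSpace.exp A = (Real.exp (∑ k, |A k k|))⁻¹ •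
      NormedSpace.exp (A + algebraMap ℝ _ (∑ k, |A k k|)) := by
    rw [exp_add_algebraMap, inv_smul_smul₀ (Real.exp_ne_zero _)]
  rw [hexp, smul_apply, smul_eq_mul]
  exact mul_nonneg (by positivity) (Matrix.exp_apply_nonneg hA.add_algebraMap_nonneg i j)

end IsMetzler

end Matrix

/-- If `A` is an `n × n` real Metzler matrix (all off-diagonal entries
nonnegative), then all entries of `exp(tA)` are nonnegative for every `t ≥ 0`. -/
theorem matrix_exp_nonneg_of_metzler (n : ℕ) (A : Matrix (Fin n) (Fin n) ℝ)
    (hA : ∀ i j, i ≠ j → 0 ≤ A i j) (t : ℝ) (ht : 0 ≤ t) :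
    ∀ i j, 0 ≤ NormedSpace.exp (t • A) i j :=
  (IsMetzler.smul hA ht).exp_apply_nonneg
end

section
/- Let a₁, a₂, a₃ be pairwise distinct positive reals, g₁, g₂ > 0, and let A be the 3×3 real matrix A = [[−a₁,0,0],[g₁,−a₂,0],[0,g₂,−a₃]]. Then for every nonzero real t, exp(tA) equals the lower-triangular matrix with diagonal entries e^{−a₁t}, e^{−a₂t}, e^{−a₃t}, entry (2,1) equal to g₁ t · e[−a₁t, −a₂t], entry (3,2) equal to g₂ t · e[−a₂t, −a₃t], entry (3,1) equal to g₁ g₂ t² · e[−a₁t, −a₂t, −a₃t], and zeros above the diagonal, where e[·,·] and e[·,·,·] denote divided differences of the scalar exponential function z ↦ eᶻ. -/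
/-!
A lower bidiagonal 3 × 3 matrix with distinct diagonal entries `x, y, z` is diagonalisable, and
its eigenvectors can be written down by forward substitution. Conjugating `exp` of the diagonal
matrix back, every entry of `exp` is a combination of `eˣ, eʸ, eᶻ` which, after clearing
denominators, is the stated divided difference. The theorem is the case
`x, y, z = -a₁ t, -a₂ t, -a₃ t`, `p, q = g₁ t, g₂ t`, whose diagonal entries are distinct since
`t ≠ 0`.
-/

open Matrix

/-- First divided difference of `f` at `x, y`. -/
noncomputable def dd1 (f : ℝ → ℝ) (x y : ℝ) : ℝ := (f y - f x) / (y - x)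

/-- Second divided difference of `f` at `x, y, z`. -/
noncomputable def dd2 (f : ℝ → ℝ) (x y z : ℝ) : ℝ := (dd1 f y z - dd1 f x y) / (z - x)

section LowerBidiagonal

variable (x y z p q : ℝ)

/-- The columns are eigenvectors of `!![x, 0, 0; p, y, 0; 0, q, z]` for `x`, `y` and `z`. -/
noncomputable def lowerBidiagonalEigenvectors : Matrix (Fin 3) (Fin 3) ℝ :=
  !![1, 0, 0; p / (x - y), 1, 0; p * q / ((x - y) * (x - z)), q / (y - z), 1]

noncomputable def lowerBidiagonalEigenvectorsInv : Matrix (Fin 3) (Fin 3) ℝ :=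
  !![1, 0, 0; -p / (x - y), 1, 0; p * q / ((y - z) * (x - z)), -q / (y - z), 1]

variable {x y z}

theorem lowerBidiagonalEigenvectors_mul_inv (hxy : x ≠ y) (hxz : x ≠ z) (hyz : y ≠ z) :
    lowerBidiagonalEigenvectors x y z p q * lowerBidiagonalEigenvectorsInv x y z p q = 1 := by
  have := sub_ne_zero.2 hxy
  have := sub_ne_zero.2 hxz
  have := sub_ne_zero.2 hyz
  ext i j
  fin_cases i <;> fin_cases j <;>
    simp [lowerBidiagonalEigenvectors, lowerBidiagonalEigenvectorsInv, mul_apply,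
      Fin.sum_univ_three] <;> field_simp <;> ring

theorem lowerBidiagonal_eq_conj_diagonal (hxy : x ≠ y) (hxz : x ≠ z) (hyz : y ≠ z) :
    !![x, 0, 0; p, y, 0; 0, q, z] = lowerBidiagonalEigenvectors x y z p q *
      diagonal ![x, y, z] * lowerBidiagonalEigenvectorsInv x y z p q := by
  have := sub_ne_zero.2 hxy
  have := sub_ne_zero.2 hxz
  have := sub_ne_zero.2 hyz
  ext i j
  fin_cases i <;> fin_cases j <;>
    simp [lowerBidiagonalEigenvectors, lowerBidiagonalEigenvectorsInv, mul_apply,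
      Fin.sum_univ_three, vecMul_diagonal] <;> field_simp <;> ring

theorem exp_lowerBidiagonal (hxy : x ≠ y) (hxz : x ≠ z) (hyz : y ≠ z) :
    NormedSpace.exp !![x, 0, 0; p, y, 0; 0, q, z] =
      !![Real.exp x, 0, 0;
         p * dd1 Real.exp x y, Real.exp y, 0;
         p * q * dd2 Real.exp x y z, q * dd1 Real.exp y z, Real.exp z] := by
  have hPQ := lowerBidiagonalEigenvectors_mul_inv p q hxy hxz hyz
  have hconj : NormedSpace.exp (lowerBidiagonalEigenvectors x y z p q * diagonal ![x, y, z] *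
        lowerBidiagonalEigenvectorsInv x y z p q) = lowerBidiagonalEigenvectors x y z p q *
        NormedSpace.exp (diagonal ![x, y, z]) * lowerBidiagonalEigenvectorsInv x y z p q :=
    exp_units_conj ⟨_, _, hPQ, mul_eq_one_comm.1 hPQ⟩ _
  rw [lowerBidiagonal_eq_conj_diagonal p q hxy hxz hyz, hconj, exp_diagonal]
  have := sub_ne_zero.2 hxy
  have := sub_ne_zero.2 hxz
  have := sub_ne_zero.2 hyz
  have := sub_ne_zero.2 hxy.symm
  have := sub_ne_zero.2 hxz.symm
  have := sub_ne_zero.2 hyz.symm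
  ext i j
  fin_cases i <;> fin_cases j <;>
    simp [lowerBidiagonalEigenvectors, lowerBidiagonalEigenvectorsInv, mul_apply,
      Fin.sum_univ_three, vecMul_diagonal, Pi.exp_def, dd1, dd2, Real.exp_eq_exp_ℝ] <;>
    field_simp <;> ring

end LowerBidiagonal

theorem matrix_exp_opitz_general (a₁ a₂ a₃ g₁ g₂ : ℝ)
    (h12 : a₁ ≠ a₂) (h13 : a₁ ≠ a₃) (h23 : a₂ ≠ a₃)
    (A : Matrix (Fin 3) (Fin 3) ℝ)
    (hA : A = !![-a₁, 0, 0; g₁, -a₂, 0; 0, g₂, -a₃])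
    (t : ℝ) (ht : t ≠ 0) :
    NormedSpace.exp (t • A) =
      !![Real.exp (-a₁ * t), 0, 0;
         g₁ * t * dd1 Real.exp (-a₁ * t) (-a₂ * t), Real.exp (-a₂ * t), 0;
         g₁ * g₂ * t ^ 2 * dd2 Real.exp (-a₁ * t) (-a₂ * t) (-a₃ * t),
           g₂ * t * dd1 Real.exp (-a₂ * t) (-a₃ * t), Real.exp (-a₃ * t)] := by
  have hscale : Function.Injective fun a : ℝ => -a * t := fun a b h => by simpa [ht] using h
  have htA : t • A = !![-a₁ * t, 0, 0; g₁ * t, -a₂ * t, 0; 0, g₂ * t, -a₃ * t] := by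
    rw [hA]
    ext i j
    fin_cases i <;> fin_cases j <;> simp [mul_comm t]
  rw [htA, exp_lowerBidiagonal _ _ (hscale.ne h12) (hscale.ne h13) (hscale.ne h23),
    show g₁ * t * (g₂ * t) = g₁ * g₂ * t ^ 2 by ring]

/-- Opitz formula for the matrix exponential of the IGO system matrix:
for `A = [[−a₁,0,0],[g₁,−a₂,0],[0,g₂,−a₃]]` with pairwise distinct positive `a₁,a₂,a₃`
and `g₁,g₂ > 0`, and every nonzero real `t`, `exp(tA)` is the lower-triangular matrix with
diagonal entries `e^{−aᵢt}`, entry (2,1) equal to `g₁ t · e[−a₁t, −a₂t]`, entry (3,2) equal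
to `g₂ t · e[−a₂t, −a₃t]` and entry (3,1) equal to `g₁ g₂ t² · e[−a₁t, −a₂t, −a₃t]`. -/
theorem matrix_exp_opitz (a₁ a₂ a₃ g₁ g₂ : ℝ)
    (ha₁ : 0 < a₁) (ha₂ : 0 < a₂) (ha₃ : 0 < a₃)
    (h12 : a₁ ≠ a₂) (h13 : a₁ ≠ a₃) (h23 : a₂ ≠ a₃)
    (hg₁ : 0 < g₁) (hg₂ : 0 < g₂)
    (A : Matrix (Fin 3) (Fin 3) ℝ)
    (hA : A = !![-a₁, 0, 0; g₁, -a₂, 0; 0, g₂, -a₃])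
    (t : ℝ) (ht : t ≠ 0) :
    NormedSpace.exp (t • A) =
      !![Real.exp (-a₁ * t), 0, 0;
         g₁ * t * dd1 Real.exp (-a₁ * t) (-a₂ * t), Real.exp (-a₂ * t), 0;
         g₁ * g₂ * t ^ 2 * dd2 Real.exp (-a₁ * t) (-a₂ * t) (-a₃ * t),
           g₂ * t * dd1 Real.exp (-a₂ * t) (-a₃ * t), Real.exp (-a₃ * t)] :=
  matrix_exp_opitz_general a₁ a₂ a₃ g₁ g₂ h12 h13 h23 A hA t ht
end

section
/- Let a₁, a₂, a₃ be pairwise distinct positive reals, g₁, g₂ > 0, A = [[−a₁,0,0],[g₁,−a₂,0],[0,g₂,−a₃]], B = (1,0,0)ᵀ, and C = (0,0,1). Then for every T > 0 the matrix exp(−T·A) − I is invertible, and the scalar function g(T) := C · (exp(−T·A) − I)⁻¹ · B is strictly positive and strictly decreasing on (0,∞). -/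
/-!
The lower unitriangular matrix `P` of eigenvectors diagonalises `A`, so
`(exp (-T A) - 1)⁻¹ = P diag (w_T aᵢ) P⁻¹` with `w_T a = (exp (T a) - 1)⁻¹`, and its `(3,1)`
entry is `g₁ g₂` times the second divided difference `slope (slope w_T a₁) a₂ a₃`. Second divided
differences of strictly convex functions are positive, which gives positivity. For `T₁ < T₂` the
difference `w_{T₁} - w_{T₂}` is again strictly convex: its second derivative is
`(F (T₁ a) - F (T₂ a)) / a²` with `F x = x² eˣ (eˣ + 1) / (eˣ - 1)³`, and `F` is decreasing on
`(0, ∞)` because `2 sinh x < x (cosh x + 2)` there. This gives strict monotonicity.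
-/

open Matrix Real Set

theorem slope_slope_sub {k : Type*} [Field k] (f g : k → k) (a b c : k) :
    slope (slope (fun x => f x - g x) a) b c = slope (slope f a) b c - slope (slope g a) b c := by
  simp only [slope_def_field]
  ring

section SecondSlope
variable {𝕜 : Type*} [Field 𝕜] [LinearOrder 𝕜] [IsStrictOrderedRing 𝕜] {s : Set 𝕜} {f : 𝕜 → 𝕜}
  {a b c : 𝕜}

theorem StrictConvexOn.strictMonoOn_slope (hf : StrictConvexOn 𝕜 s f) (ha : a ∈ s) :
    StrictMonoOn (slope f a) (s \ {a}) := fun x hx y hy hxy => by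
  simpa only [slope_def_field] using hf.secant_strict_mono ha hx.1 hy.1 hx.2 hy.2 hxy

theorem StrictConvexOn.slope_slope_pos (hf : StrictConvexOn 𝕜 s f) (ha : a ∈ s) (hb : b ∈ s)
    (hc : c ∈ s) (hba : b ≠ a) (hca : c ≠ a) (hbc : b ≠ c) : 0 < slope (slope f a) b c :=
  (hf.strictMonoOn_slope ha).slope_pos ⟨hb, hba⟩ ⟨hc, hca⟩ hbc

end SecondSlope

theorem strictConvexOn_of_hasDerivAt2_pos {D : Set ℝ} (hD : Convex ℝ D) (hDo : IsOpen D)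
    {f f' f'' : ℝ → ℝ} (hf : ∀ x ∈ D, HasDerivAt f (f' x) x)
    (hf' : ∀ x ∈ D, HasDerivAt f' (f'' x) x) (hf'' : ∀ x ∈ D, 0 < f'' x) :
    StrictConvexOn ℝ D f := by
  have hmono : StrictMonoOn f' D :=
    strictMonoOn_of_hasDerivWithinAt_pos hD
      (fun x hx => (hf' x hx).continuousAt.continuousWithinAt)
      (fun x hx => (hf' x (interior_subset hx)).hasDerivWithinAt)
      (fun x hx => hf'' x (interior_subset hx))
  refine StrictMonoOn.strictConvexOn_of_deriv hD
    (fun x hx => (hf x hx).continuousAt.continuousWithinAt) ?_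
  rw [hDo.interior_eq]
  exact hmono.congr fun x hx => ((hf x hx).deriv).symm

theorem Real.two_mul_sinh_lt_mul_cosh_add_two {x : ℝ} (hx : 0 < x) :
    2 * sinh x < x * (cosh x + 2) := by
  have hmono : MonotoneOn (fun y => y * sinh y - cosh y) (Ici 0) :=
    monotoneOn_of_hasDerivWithinAt_nonneg (convex_Ici 0) (by fun_prop)
      (fun y _ => (((hasDerivAt_id y).mul (hasDerivAt_sinh y)).sub
        (hasDerivAt_cosh y)).hasDerivWithinAt)
      (fun y hy => by
        rw [interior_Ici] at hy
        simp only [id, one_mul, add_sub_cancel_left]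
        exact mul_nonneg hy.le (cosh_pos y).le)
  have hstrict : StrictMonoOn (fun y => y * (cosh y + 2) - 2 * sinh y) (Ici 0) :=
    strictMonoOn_of_hasDerivWithinAt_pos (convex_Ici 0) (by fun_prop)
      (fun y _ => (((hasDerivAt_id y).mul ((hasDerivAt_cosh y).add_const 2)).sub
        ((hasDerivAt_sinh y).const_mul 2)).hasDerivWithinAt)
      (fun y hy => by
        rw [interior_Ici] at hy
        have := hmono self_mem_Ici (mem_Ici.2 hy.le) hy.le
        simp only [id, zero_mul, sinh_zero, cosh_zero] at this ⊢
        linarith)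
  have := hstrict self_mem_Ici hx.le hx
  simp only [zero_mul, sinh_zero, mul_zero, sub_zero] at this
  linarith

theorem Real.exp_sub_one_ne_zero {x : ℝ} (hx : x ≠ 0) : exp x - 1 ≠ 0 :=
  sub_ne_zero.2 fun h => hx ((exp_eq_one_iff x).1 h)

theorem strictAntiOn_sq_mul_exp_mul_exp_add_one_div_exp_sub_one_pow_three :
    StrictAntiOn (fun x => x ^ 2 * exp x * (exp x + 1) / (exp x - 1) ^ 3) (Ioi 0) := by
  have hderiv : ∀ x : ℝ, x ≠ 0 →
      HasDerivAt (fun x => x ^ 2 * exp x * (exp x + 1) / (exp x - 1) ^ 3)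
        ((((2 * x * exp x + x ^ 2 * exp x) * (exp x + 1) + x ^ 2 * exp x * exp x) * (exp x - 1) ^ 3
          - x ^ 2 * exp x * (exp x + 1) * (3 * (exp x - 1) ^ 2 * exp x)) / ((exp x - 1) ^ 3) ^ 2)
        x := by
    intro x hx
    have hE := hasDerivAt_exp x
    have hN := ((hasDerivAt_pow 2 x).fun_mul hE).fun_mul (hE.add_const 1)
    have hD := (hE.sub_const 1).fun_pow 3
    refine (hN.fun_div hD (pow_ne_zero 3 (exp_sub_one_ne_zero hx))).congr_deriv ?_
    push_cast
    ring
  refine strictAntiOn_of_hasDerivWithinAt_neg (convex_Ioi 0)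
    (fun x hx => (hderiv x (ne_of_gt hx)).continuousAt.continuousWithinAt)
    (fun x hx => (hderiv x (ne_of_gt (interior_subset hx))).hasDerivWithinAt) (fun x hx => ?_)
  rw [interior_Ioi, mem_Ioi] at hx
  have hE : 0 < exp x - 1 := sub_pos.2 (one_lt_exp_iff.2 hx)
  have hnum : ((2 * x * exp x + x ^ 2 * exp x) * (exp x + 1) + x ^ 2 * exp x * exp x)
        * (exp x - 1) ^ 3 - x ^ 2 * exp x * (exp x + 1) * (3 * (exp x - 1) ^ 2 * exp x)
      = 2 * x * exp x ^ 2 * (exp x - 1) ^ 2 * (2 * sinh x - x * (cosh x + 2)) := by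
    rw [sinh_eq, cosh_eq, Real.exp_neg]
    field_simp
    ring
  rw [hnum]
  refine div_neg_of_neg_of_pos (mul_neg_of_pos_of_neg (by positivity) ?_) (by positivity)
  linarith [two_mul_sinh_lt_mul_cosh_add_two hx]

theorem hasDerivAt_inv_exp_mul_sub_one {T a : ℝ} (h : T * a ≠ 0) :
    HasDerivAt (fun a => (exp (T * a) - 1)⁻¹) (-exp (T * a) / (exp (T * a) - 1) ^ 2 * T) a := by
  have hinv :
      HasDerivAt (fun x => (exp x - 1)⁻¹) (-exp (T * a) / (exp (T * a) - 1) ^ 2) (T * a) := by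
    simpa only [neg_div] using
      ((hasDerivAt_exp (T * a)).sub_const 1).fun_inv (exp_sub_one_ne_zero h)
  exact hinv.comp a (hasDerivAt_const_mul T)

theorem hasDerivAt_neg_exp_mul_div_exp_mul_sub_one_sq_mul {T a : ℝ} (h : T * a ≠ 0) :
    HasDerivAt (fun a => -exp (T * a) / (exp (T * a) - 1) ^ 2 * T)
      (exp (T * a) * (exp (T * a) + 1) / (exp (T * a) - 1) ^ 3 * T * T) a := by
  have hE := hasDerivAt_exp (T * a)
  have hne := exp_sub_one_ne_zero h
  have hdiv : HasDerivAt (fun x => -exp x / (exp x - 1) ^ 2)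
      (exp (T * a) * (exp (T * a) + 1) / (exp (T * a) - 1) ^ 3) (T * a) := by
    refine (hE.neg.fun_div ((hE.sub_const 1).fun_pow 2) (pow_ne_zero 2 hne)).congr_deriv ?_
    simp only [Pi.neg_apply]
    field_simp
    push_cast
    ring
  exact (hdiv.comp a (hasDerivAt_const_mul T)).mul_const T

theorem strictConvexOn_inv_exp_mul_sub_one {T : ℝ} (hT : 0 < T) :
    StrictConvexOn ℝ (Ioi 0) fun a => (exp (T * a) - 1)⁻¹ :=
  strictConvexOn_of_hasDerivAt2_pos (convex_Ioi 0) isOpen_Ioi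
    (fun a ha => hasDerivAt_inv_exp_mul_sub_one (mul_pos hT ha).ne')
    (fun a ha => hasDerivAt_neg_exp_mul_div_exp_mul_sub_one_sq_mul (mul_pos hT ha).ne')
    fun a ha => by
      have hE : 0 < exp (T * a) - 1 := sub_pos.2 (one_lt_exp_iff.2 (mul_pos hT ha))
      positivity

theorem strictConvexOn_inv_exp_mul_sub_one_sub {T₁ T₂ : ℝ} (hT₁ : 0 < T₁) (hT₁₂ : T₁ < T₂) :
    StrictConvexOn ℝ (Ioi 0) fun a => (exp (T₁ * a) - 1)⁻¹ - (exp (T₂ * a) - 1)⁻¹ := by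
  have hT₂ : 0 < T₂ := hT₁.trans hT₁₂
  refine strictConvexOn_of_hasDerivAt2_pos (convex_Ioi 0) isOpen_Ioi
    (fun a ha => (hasDerivAt_inv_exp_mul_sub_one (mul_pos hT₁ ha).ne').sub
      (hasDerivAt_inv_exp_mul_sub_one (mul_pos hT₂ ha).ne'))
    (fun a ha => (hasDerivAt_neg_exp_mul_div_exp_mul_sub_one_sq_mul (mul_pos hT₁ ha).ne').sub
      (hasDerivAt_neg_exp_mul_div_exp_mul_sub_one_sq_mul (mul_pos hT₂ ha).ne')) fun a ha => ?_
  rw [mem_Ioi] at ha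
  have hF := strictAntiOn_sq_mul_exp_mul_exp_add_one_div_exp_sub_one_pow_three
    (mem_Ioi.2 (mul_pos hT₁ ha)) (mem_Ioi.2 (mul_pos hT₂ ha)) (mul_lt_mul_of_pos_right hT₁₂ ha)
  have hscale : ∀ T, exp (T * a) * (exp (T * a) + 1) / (exp (T * a) - 1) ^ 3 * T * T =
      (T * a) ^ 2 * exp (T * a) * (exp (T * a) + 1) / (exp (T * a) - 1) ^ 3 / a ^ 2 := by
    intro T
    field_simp
  rw [sub_pos, hscale, hscale]
  exact div_lt_div_of_pos_right hF (by positivity)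

section ConjDiagonal
variable {n : Type*} [Fintype n] [DecidableEq n]

theorem Matrix.exp_conj_diagonal_sub_one {U : Matrix n n ℝ} (hU : IsUnit U) (d : n → ℝ) :
    NormedSpace.exp (U * diagonal d * U⁻¹) - 1 = U * diagonal (fun i => exp (d i) - 1) * U⁻¹ := by
  have hexp : NormedSpace.exp d = fun i => exp (d i) := by
    rw [Pi.exp_def, Real.exp_eq_exp_ℝ]
  rw [Matrix.exp_conj U _ hU, Matrix.exp_diagonal, hexp, ← diagonal_sub, diagonal_one,
    Matrix.mul_sub, Matrix.sub_mul, Matrix.mul_one,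
    Matrix.mul_nonsing_inv _ ((isUnit_iff_isUnit_det U).1 hU)]

variable {K : Type*} [Field K] {U : Matrix n n K} {v : n → K}

theorem Matrix.isUnit_conj_diagonal (hU : IsUnit U) (hv : ∀ i, v i ≠ 0) :
    IsUnit (U * diagonal v * U⁻¹) :=
  (hU.mul (isUnit_diagonal.2 (Pi.isUnit_iff.2 fun i => (hv i).isUnit))).mul
    (isUnit_nonsing_inv_iff.2 hU)

theorem Matrix.inv_conj_diagonal (hU : IsUnit U) (hv : ∀ i, v i ≠ 0) :
    (U * diagonal v * U⁻¹)⁻¹ = U * diagonal v⁻¹ * U⁻¹ := by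
  refine inv_eq_right_inv ?_
  have hdet := (isUnit_iff_isUnit_det U).1 hU
  simp only [Matrix.mul_assoc]
  rw [nonsing_inv_mul_cancel_left U _ hdet, ← Matrix.mul_assoc (diagonal v), diagonal_mul_diagonal,
    show (fun i => v i * v⁻¹ i) = fun _ => 1 from funext fun i => mul_inv_cancel₀ (hv i),
    diagonal_one, Matrix.one_mul, mul_nonsing_inv U hdet]

end ConjDiagonal

section BidiagEigenbasis
variable {K : Type*} [Field K] {a₁ a₂ a₃ : K} (g₁ g₂ : K)

def bidiagEigenbasis (a₁ a₂ a₃ g₁ g₂ : K) : Matrix (Fin 3) (Fin 3) K :=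
  !![1, 0, 0;
    g₁ / (a₂ - a₁), 1, 0;
    g₁ * g₂ / ((a₂ - a₁) * (a₃ - a₁)), g₂ / (a₃ - a₂), 1]

theorem isUnit_bidiagEigenbasis : IsUnit (bidiagEigenbasis a₁ a₂ a₃ g₁ g₂) := by
  simp [isUnit_iff_isUnit_det, bidiagEigenbasis, det_fin_three]

variable (h12 : a₁ ≠ a₂) (h13 : a₁ ≠ a₃) (h23 : a₂ ≠ a₃)
include h12 h13 h23

theorem inv_bidiagEigenbasis : (bidiagEigenbasis a₁ a₂ a₃ g₁ g₂)⁻¹ =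
    !![1, 0, 0;
      -(g₁ / (a₂ - a₁)), 1, 0;
      g₁ * g₂ / ((a₃ - a₁) * (a₃ - a₂)), -(g₂ / (a₃ - a₂)), 1] := by
  refine inv_eq_right_inv ?_
  ext i j
  simp only [mul_apply, Fin.sum_univ_three]
  fin_cases i <;> fin_cases j <;> simp [bidiagEigenbasis]
  field_simp [sub_ne_zero, h12.symm, h13.symm, h23.symm]
  ring

theorem bidiag_eq_conj_diagonal :
    !![-a₁, 0, 0; g₁, -a₂, 0; 0, g₂, -a₃] =
      bidiagEigenbasis a₁ a₂ a₃ g₁ g₂ * diagonal (-![a₁, a₂, a₃]) *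
        (bidiagEigenbasis a₁ a₂ a₃ g₁ g₂)⁻¹ := by
  rw [inv_bidiagEigenbasis g₁ g₂ h12 h13 h23]
  ext i j
  simp only [mul_apply, Fin.sum_univ_three]
  fin_cases i <;> fin_cases j <;> simp [bidiagEigenbasis] <;>
    field_simp [sub_ne_zero, h12.symm, h13.symm, h23.symm] <;> ring

theorem bidiagEigenbasis_conj_diagonal_apply_two_zero (φ : K → K) :
    (bidiagEigenbasis a₁ a₂ a₃ g₁ g₂ * diagonal (fun i => φ (![a₁, a₂, a₃] i)) *
        (bidiagEigenbasis a₁ a₂ a₃ g₁ g₂)⁻¹) 2 0 =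
      g₁ * g₂ * slope (slope φ a₁) a₂ a₃ := by
  rw [inv_bidiagEigenbasis g₁ g₂ h12 h13 h23]
  simp only [mul_apply, Fin.sum_univ_three]
  simp [bidiagEigenbasis, slope_def_field]
  field_simp [sub_ne_zero, h12.symm, h13.symm, h23.symm]
  ring

end BidiagEigenbasis

theorem exp_mul_vecCons_sub_one_ne_zero {a₁ a₂ a₃ T : ℝ} (ha₁ : a₁ ≠ 0) (ha₂ : a₂ ≠ 0)
    (ha₃ : a₃ ≠ 0) (hT : T ≠ 0) (i : Fin 3) : exp (T * ![a₁, a₂, a₃] i) - 1 ≠ 0 := by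
  fin_cases i <;> exact exp_sub_one_ne_zero (mul_ne_zero hT ‹_›)

section NegSmulBidiag
variable {a₁ a₂ a₃ : ℝ} (g₁ g₂ : ℝ) (h12 : a₁ ≠ a₂) (h13 : a₁ ≠ a₃) (h23 : a₂ ≠ a₃) {T : ℝ}
include h12 h13 h23

theorem exp_neg_smul_bidiag_sub_one :
    NormedSpace.exp ((-T) • !![-a₁, 0, 0; g₁, -a₂, 0; 0, g₂, -a₃]) - 1 =
      bidiagEigenbasis a₁ a₂ a₃ g₁ g₂ * diagonal (fun i => exp (T * ![a₁, a₂, a₃] i) - 1) *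
        (bidiagEigenbasis a₁ a₂ a₃ g₁ g₂)⁻¹ := by
  rw [bidiag_eq_conj_diagonal g₁ g₂ h12 h13 h23, ← Matrix.smul_mul, ← Matrix.mul_smul,
    ← diagonal_smul, exp_conj_diagonal_sub_one (isUnit_bidiagEigenbasis g₁ g₂)]
  congr 3
  funext i
  fin_cases i <;> simp

variable (ha₁ : a₁ ≠ 0) (ha₂ : a₂ ≠ 0) (ha₃ : a₃ ≠ 0) (hT : T ≠ 0)
include ha₁ ha₂ ha₃ hT

theorem isUnit_exp_neg_smul_bidiag_sub_one :
    IsUnit (NormedSpace.exp ((-T) • !![-a₁, 0, 0; g₁, -a₂, 0; 0, g₂, -a₃]) - 1) := by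
  rw [exp_neg_smul_bidiag_sub_one g₁ g₂ h12 h13 h23]
  exact isUnit_conj_diagonal (isUnit_bidiagEigenbasis g₁ g₂)
    (exp_mul_vecCons_sub_one_ne_zero ha₁ ha₂ ha₃ hT)

theorem exp_neg_smul_bidiag_sub_one_inv_apply_two_zero :
    (NormedSpace.exp ((-T) • !![-a₁, 0, 0; g₁, -a₂, 0; 0, g₂, -a₃]) - 1)⁻¹ 2 0 =
      g₁ * g₂ * slope (slope (fun a => (exp (T * a) - 1)⁻¹) a₁) a₂ a₃ := by
  rw [exp_neg_smul_bidiag_sub_one g₁ g₂ h12 h13 h23, inv_conj_diagonal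
    (isUnit_bidiagEigenbasis g₁ g₂) (exp_mul_vecCons_sub_one_ne_zero ha₁ ha₂ ha₃ hT),
    Pi.inv_def]
  exact bidiagEigenbasis_conj_diagonal_apply_two_zero g₁ g₂ h12 h13 h23
    fun a => (exp (T * a) - 1)⁻¹

end NegSmulBidiag

/-- For the IGO system matrix `A = [[−a₁,0,0],[g₁,−a₂,0],[0,g₂,−a₃]]` with
pairwise distinct positive `a₁,a₂,a₃` and `g₁,g₂ > 0`: for every `T > 0` the matrix
`exp(−T·A) − I` is invertible, and the scalar function
`g(T) := C·(exp(−T·A) − I)⁻¹·B` (the (3,1) entry of the inverse) is strictly positive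
and strictly decreasing on `(0,∞)`. -/
theorem igo_transfer_pos_strict_anti (a₁ a₂ a₃ g₁ g₂ : ℝ)
    (ha₁ : 0 < a₁) (ha₂ : 0 < a₂) (ha₃ : 0 < a₃)
    (h12 : a₁ ≠ a₂) (h13 : a₁ ≠ a₃) (h23 : a₂ ≠ a₃)
    (hg₁ : 0 < g₁) (hg₂ : 0 < g₂)
    (A : Matrix (Fin 3) (Fin 3) ℝ)
    (hA : A = !![-a₁, 0, 0; g₁, -a₂, 0; 0, g₂, -a₃]) :
    (∀ T : ℝ, 0 < T → IsUnit (NormedSpace.exp ((-T) • A) - 1)) ∧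
    (∀ T : ℝ, 0 < T → 0 < (NormedSpace.exp ((-T) • A) - 1)⁻¹ 2 0) ∧
    StrictAntiOn (fun T : ℝ => (NormedSpace.exp ((-T) • A) - 1)⁻¹ 2 0) (Set.Ioi 0) := by
  subst hA
  have hentry := fun T (hT : 0 < T) => exp_neg_smul_bidiag_sub_one_inv_apply_two_zero g₁ g₂
    h12 h13 h23 ha₁.ne' ha₂.ne' ha₃.ne' hT.ne'
  refine ⟨fun T hT => ?_, fun T hT => ?_, fun T₁ hT₁ T₂ hT₂ hlt => ?_⟩
  · exact isUnit_exp_neg_smul_bidiag_sub_one g₁ g₂ h12 h13 h23 ha₁.ne' ha₂.ne' ha₃.ne' hT.ne'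
  · rw [hentry T hT]
    exact mul_pos (mul_pos hg₁ hg₂) ((strictConvexOn_inv_exp_mul_sub_one hT).slope_slope_pos
      ha₁ ha₂ ha₃ h12.symm h13.symm h23)
  · have hpos := (strictConvexOn_inv_exp_mul_sub_one_sub hT₁ hlt).slope_slope_pos
      ha₁ ha₂ ha₃ h12.symm h13.symm h23
    rw [slope_slope_sub, sub_pos] at hpos
    simp only [hentry T₁ hT₁, hentry T₂ hT₂]
    exact mul_lt_mul_of_pos_left hpos (mul_pos hg₁ hg₂)
end

section
/- Let a₁, a₂, a₃ be pairwise distinct positive reals, g₁, g₂ > 0, A = [[−a₁,0,0],[g₁,−a₂,0],[0,g₂,−a₃]], B = (1,0,0)ᵀ, and C = (0,0,1). Then for every T > 0, C · (exp(−T·A) − I)⁻¹ · B = g₁ g₂ Σ_{i=1}^{3} α_i / (e^{a_i T} − 1), where α_i = Π_{j≠i} 1/(a_j − a_i). -/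
/-!
The matrix `A` is lower bidiagonal with distinct diagonal entries, so `A = P diag(-a) P⁻¹` with
`P` unit lower triangular. Hence `(exp(-T A) - I)⁻¹ = P diag(1 / (e^{aᵢ T} - 1)) P⁻¹`, and the
`(3,1)` entry `P₃ᵢ (P⁻¹)ᵢ₁` of the `i`-th rank-one summand is exactly `g₁ g₂ αᵢ`.
-/

open Matrix NormedSpace Finset

namespace Matrix

variable {n K : Type*} [Fintype n] [DecidableEq n]

theorem exp_conj_diagonal [NormedField K] [NormedAlgebra ℚ K] [CompleteSpace K]
    {P Q : Matrix n n K} (hPQ : P * Q = 1) (d : n → K) :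
    exp (P * diagonal d * Q) = P * diagonal (fun i => exp (d i)) * Q := by
  obtain rfl := inv_eq_right_inv hPQ
  rw [exp_conj P _ (.of_mul_eq_one _ hPQ), exp_diagonal, Pi.exp_def]

theorem inv_conj_diagonal_sub_one [Field K] {P Q : Matrix n n K} (hPQ : P * Q = 1)
    {e : n → K} (he : ∀ i, e i ≠ 1) :
    (P * diagonal e * Q - 1)⁻¹ = P * diagonal (fun i => (e i - 1)⁻¹) * Q := by
  have hsub : P * diagonal e * Q - 1 = P * diagonal (fun i => e i - 1) * Q := by
    have : diagonal (fun i => e i - 1) = diagonal e - 1 := by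
      rw [← diagonal_one, diagonal_sub]
    rw [this, Matrix.mul_sub, Matrix.sub_mul, Matrix.mul_one, hPQ]
  rw [hsub]
  refine inv_eq_right_inv ?_
  calc P * diagonal (fun i => e i - 1) * Q * (P * diagonal (fun i => (e i - 1)⁻¹) * Q)
      = P * (diagonal (fun i => e i - 1) * (Q * P) * diagonal (fun i => (e i - 1)⁻¹)) * Q := by
        simp only [Matrix.mul_assoc]
    _ = 1 := by
        rw [mul_eq_one_comm.mp hPQ, Matrix.mul_one, diagonal_mul_diagonal]
        simp_rw [mul_inv_cancel₀ (sub_ne_zero.mpr (he _)), diagonal_one, Matrix.mul_one, hPQ]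

end Matrix

/-- The columns are eigenvectors of `!![-a₁, 0, 0; g₁, -a₂, 0; 0, g₂, -a₃]` for the eigenvalues
`-a₁, -a₂, -a₃`. -/
noncomputable def igoModalMatrix (a₁ a₂ a₃ g₁ g₂ : ℝ) : Matrix (Fin 3) (Fin 3) ℝ :=
  !![1, 0, 0;
     g₁ / (a₂ - a₁), 1, 0;
     g₁ * g₂ / ((a₂ - a₁) * (a₃ - a₁)), g₂ / (a₃ - a₂), 1]

noncomputable def igoModalMatrixInv (a₁ a₂ a₃ g₁ g₂ : ℝ) : Matrix (Fin 3) (Fin 3) ℝ :=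
  !![1, 0, 0;
     -(g₁ / (a₂ - a₁)), 1, 0;
     g₁ / (a₂ - a₁) * (g₂ / (a₃ - a₂)) - g₁ * g₂ / ((a₂ - a₁) * (a₃ - a₁)), -(g₂ / (a₃ - a₂)), 1]

section

variable (a₁ a₂ a₃ g₁ g₂ : ℝ)

theorem igoModalMatrix_mul_igoModalMatrixInv :
    igoModalMatrix a₁ a₂ a₃ g₁ g₂ * igoModalMatrixInv a₁ a₂ a₃ g₁ g₂ = 1 := by
  ext i j
  fin_cases i <;> fin_cases j <;>
    simp [igoModalMatrix, igoModalMatrixInv, mul_apply, Fin.sum_univ_three, one_apply]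
  ring

variable {a₁ a₂ a₃}

theorem igoMatrix_eq_conj_diagonal (h12 : a₁ ≠ a₂) (h13 : a₁ ≠ a₃) (h23 : a₂ ≠ a₃) :
    !![-a₁, 0, 0; g₁, -a₂, 0; 0, g₂, -a₃] =
      igoModalMatrix a₁ a₂ a₃ g₁ g₂ * diagonal (-![a₁, a₂, a₃]) *
        igoModalMatrixInv a₁ a₂ a₃ g₁ g₂ := by
  ext i j
  fin_cases i <;> fin_cases j <;>
    simp [igoModalMatrix, igoModalMatrixInv, mul_apply, Fin.sum_univ_three, -cons_mul] <;>
    field_simp <;> ring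

theorem igoModalMatrix_conj_diagonal_apply_two_zero (h12 : a₁ ≠ a₂) (h13 : a₁ ≠ a₃)
    (h23 : a₂ ≠ a₃) (f : Fin 3 → ℝ) :
    (igoModalMatrix a₁ a₂ a₃ g₁ g₂ * diagonal f * igoModalMatrixInv a₁ a₂ a₃ g₁ g₂) 2 0 =
      g₁ * g₂ * ∑ i : Fin 3,
        (∏ j ∈ univ.erase i, 1 / (![a₁, a₂, a₃] j - ![a₁, a₂, a₃] i)) * f i := by
  simp [igoModalMatrix, igoModalMatrixInv, mul_apply, Fin.univ_succ,
    erase_insert_of_ne, erase_insert_eq_erase, -cons_mul]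
  field_simp
  ring

end

theorem igo_transfer_partial_fractions_general (a₁ a₂ a₃ g₁ g₂ : ℝ)
    (ha₁ : 0 < a₁) (ha₂ : 0 < a₂) (ha₃ : 0 < a₃)
    (h12 : a₁ ≠ a₂) (h13 : a₁ ≠ a₃) (h23 : a₂ ≠ a₃)
    (A : Matrix (Fin 3) (Fin 3) ℝ)
    (hA : A = !![-a₁, 0, 0; g₁, -a₂, 0; 0, g₂, -a₃])
    (a : Fin 3 → ℝ) (ha : a = ![a₁, a₂, a₃])
    (T : ℝ) (hT : 0 < T) :
    (NormedSpace.exp ((-T) • A) - 1)⁻¹ 2 0 =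
      g₁ * g₂ * ∑ i : Fin 3,
        (∏ j ∈ Finset.univ.erase i, (1 / (a j - a i))) / (Real.exp (a i * T) - 1) := by
  subst hA ha
  have hPQ := igoModalMatrix_mul_igoModalMatrixInv a₁ a₂ a₃ g₁ g₂
  have hTA : (-T) • !![-a₁, 0, 0; g₁, -a₂, 0; 0, g₂, -a₃] =
      igoModalMatrix a₁ a₂ a₃ g₁ g₂ * diagonal (fun i => ![a₁, a₂, a₃] i * T) *
        igoModalMatrixInv a₁ a₂ a₃ g₁ g₂ := by
    rw [igoMatrix_eq_conj_diagonal g₁ g₂ h12 h13 h23, ← Matrix.smul_mul, ← Matrix.mul_smul,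
      ← diagonal_smul]
    congr
    ext i
    simp only [Pi.smul_apply, Pi.neg_apply, smul_eq_mul]
    ring
  have hexp : ∀ i, exp (![a₁, a₂, a₃] i * T) ≠ 1 := by
    intro i
    have hai : 0 < ![a₁, a₂, a₃] i := by fin_cases i <;> assumption
    rw [← Real.exp_eq_exp_ℝ]
    exact (Real.one_lt_exp_iff.2 (mul_pos hai hT)).ne'
  rw [hTA, exp_conj_diagonal hPQ, inv_conj_diagonal_sub_one hPQ hexp,
    igoModalMatrix_conj_diagonal_apply_two_zero g₁ g₂ h12 h13 h23]
  simp_rw [div_eq_mul_inv, Real.exp_eq_exp_ℝ]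

/-- For the IGO system matrix `A = [[−a₁,0,0],[g₁,−a₂,0],[0,g₂,−a₃]]` with
pairwise distinct positive `a₁,a₂,a₃` and `g₁,g₂ > 0`, and every `T > 0`, the (3,1) entry
of `(exp(−T·A) − I)⁻¹` equals `g₁ g₂ Σᵢ αᵢ/(e^{aᵢT} − 1)` with
`αᵢ = Π_{j≠i} 1/(aⱼ − aᵢ)`. -/
theorem igo_transfer_partial_fractions (a₁ a₂ a₃ g₁ g₂ : ℝ)
    (ha₁ : 0 < a₁) (ha₂ : 0 < a₂) (ha₃ : 0 < a₃)
    (h12 : a₁ ≠ a₂) (h13 : a₁ ≠ a₃) (h23 : a₂ ≠ a₃)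
    (hg₁ : 0 < g₁) (hg₂ : 0 < g₂)
    (A : Matrix (Fin 3) (Fin 3) ℝ)
    (hA : A = !![-a₁, 0, 0; g₁, -a₂, 0; 0, g₂, -a₃])
    (a : Fin 3 → ℝ) (ha : a = ![a₁, a₂, a₃])
    (T : ℝ) (hT : 0 < T) :
    (NormedSpace.exp ((-T) • A) - 1)⁻¹ 2 0 =
      g₁ * g₂ * ∑ i : Fin 3,
        (∏ j ∈ Finset.univ.erase i, (1 / (a j - a i))) / (Real.exp (a i * T) - 1) :=
  igo_transfer_partial_fractions_general a₁ a₂ a₃ g₁ g₂ ha₁ ha₂ ha₃ h12 h13 h23 A hA a ha T hT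
end

section
/- Let a₁, a₂, a₃ be pairwise distinct positive reals, g₁, g₂ > 0, A = [[−a₁,0,0],[g₁,−a₂,0],[0,g₂,−a₃]], B = (1,0,0)ᵀ. Given T > 0 and λ > 0, the vector X := λ · (exp(−T·A) − I)⁻¹ · B has components x₁ = λ e^{−a₁T}/(1 − e^{−a₁T}), x₂ = λ g₁ T · e[−a₁T, −a₂T] / ((1 − e^{−a₁T})(1 − e^{−a₂T})), and x₃ = λ g₁ g₂ T² · ( e[−a₁T, −a₂T, −a₃T] + e[−(a₁+a₂)T, −(a₁+a₃)T, −(a₂+a₃)T] ) / ((1 − e^{−a₁T})(1 − e^{−a₂T})(1 − e^{−a₃T})), where e[·,·] and e[·,·,·] denote divided differences of the scalar exponential function; in particular all components of X are strictly positive. -/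
/-!
The matrix `(-T) • A` is lower bidiagonal with the distinct diagonal entries `aᵢT`, so it is
diagonalised by a unit lower triangular matrix of eigenvectors. This gives Opitz's formula for its
exponential: `exp` on the diagonal and divided differences of `exp` below it. Forward substitution
in `(exp((-T) • A) - I) X = λ B` expresses `X` through divided differences at the points `aᵢT`, and
the reflection identities
`exp[-x,-y] = e^{-(x+y)} exp[x,y]`,
`exp[-x,-y,-z] = e^{-(x+y+z)} (exp[x,y] exp[y,z] - e^y exp[x,y,z])`,
`exp[-(x+y),-(x+z),-(y+z)] = e^{-(x+y+z)} exp[x,y,z]`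
move them to the points of the statement. There all components are visibly positive, because the
first and second divided differences of the increasing, strictly convex `exp` are positive.
-/

open Matrix

lemma dd1_comm (f : ℝ → ℝ) (x y : ℝ) : dd1 f x y = dd1 f y x := by
  rw [dd1, dd1, ← neg_div_neg_eq, neg_sub, neg_sub]

lemma dd2_rev (f : ℝ → ℝ) (x y z : ℝ) : dd2 f z y x = dd2 f x y z := by
  rw [dd2, dd2, dd1_comm f z, dd1_comm f y x, ← neg_div_neg_eq, neg_sub, neg_sub]

lemma dd1_pos_of_strictMono {f : ℝ → ℝ} (hf : StrictMono f) {x y : ℝ} (hxy : x ≠ y) :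
    0 < dd1 f x y := by
  rcases hxy.lt_or_gt with h | h
  · exact div_pos (sub_pos.2 (hf h)) (sub_pos.2 h)
  · exact div_pos_of_neg_of_neg (sub_neg.2 (hf h)) (sub_neg.2 h)

lemma dd2_pos_of_strictConvexOn {f : ℝ → ℝ} (hf : StrictConvexOn ℝ Set.univ f) {x y z : ℝ}
    (hxy : x ≠ y) (hxz : x ≠ z) (hyz : y ≠ z) : 0 < dd2 f x y z := by
  have secant {u v : ℝ} (hu : u ≠ y) (hv : v ≠ y) (huv : u < v) :=
    hf.secant_strict_mono (Set.mem_univ y) (Set.mem_univ u) (Set.mem_univ v) hu hv huv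
  rw [dd2, dd1_comm f x y, dd1, dd1]
  rcases hxz.lt_or_gt with h | h
  · exact div_pos (sub_pos.2 (secant hxy hyz.symm h)) (sub_pos.2 h)
  · exact div_pos_of_neg_of_neg (sub_neg.2 (secant hyz.symm hxy h)) (sub_neg.2 h)

lemma dd2_exp_add (x y z c : ℝ) :
    dd2 Real.exp (x + c) (y + c) (z + c) = Real.exp c * dd2 Real.exp x y z := by
  simp only [dd2, dd1, add_sub_add_right_eq_sub, Real.exp_add]
  ring

lemma dd2_exp_neg_add_add (x y z : ℝ) :
    dd2 Real.exp (-(x + y)) (-(x + z)) (-(y + z)) =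
      Real.exp (-(x + y + z)) * dd2 Real.exp x y z := by
  rw [← dd2_rev Real.exp x, ← dd2_exp_add]
  ring_nf

lemma dd1_exp_neg (x y : ℝ) :
    dd1 Real.exp (-x) (-y) = Real.exp (-(x + y)) * dd1 Real.exp x y := by
  have hx : Real.exp (-(x + y)) * Real.exp x = Real.exp (-y) := by rw [← Real.exp_add]; ring_nf
  have hy : Real.exp (-(x + y)) * Real.exp y = Real.exp (-x) := by rw [← Real.exp_add]; ring_nf
  rw [dd1, dd1, neg_sub_neg, mul_div_assoc', mul_sub, hx, hy, ← neg_div_neg_eq, neg_sub, neg_sub]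

lemma dd2_exp_neg {x y z : ℝ} (hxy : x ≠ y) (hxz : x ≠ z) (hyz : y ≠ z) :
    dd2 Real.exp (-x) (-y) (-z) = Real.exp (-(x + y + z)) *
      (dd1 Real.exp x y * dd1 Real.exp y z - Real.exp y * dd2 Real.exp x y z) := by
  simp only [dd2, dd1, neg_sub_neg, Real.exp_neg, Real.exp_add]
  field_simp
  ring

lemma Real.one_sub_exp_neg (x : ℝ) : 1 - Real.exp (-x) = Real.exp (-x) * (Real.exp x - 1) := by
  rw [mul_sub, ← Real.exp_add, neg_add_cancel, Real.exp_zero, mul_one]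

lemma Real.one_sub_exp_neg_pos {x : ℝ} (hx : 0 < x) : 0 < 1 - Real.exp (-x) :=
  sub_pos.2 (Real.exp_lt_one_iff.2 (neg_neg_of_pos hx))

lemma Real.exp_neg_div_one_sub_exp_neg (x : ℝ) :
    Real.exp (-x) / (1 - Real.exp (-x)) = 1 / (Real.exp x - 1) := by
  rw [Real.one_sub_exp_neg, div_mul_cancel_left₀ (Real.exp_ne_zero _), one_div]

lemma dd1_exp_neg_div (x y : ℝ) :
    dd1 Real.exp (-x) (-y) / ((1 - Real.exp (-x)) * (1 - Real.exp (-y))) =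
      dd1 Real.exp x y / ((Real.exp x - 1) * (Real.exp y - 1)) := by
  rw [dd1_exp_neg, Real.one_sub_exp_neg, Real.one_sub_exp_neg, mul_mul_mul_comm, neg_add,
    Real.exp_add, mul_div_mul_left _ _ (by positivity)]

lemma dd2_exp_neg_add_dd2_exp_neg_add_add_div {x y z : ℝ} (hxy : x ≠ y) (hxz : x ≠ z)
    (hyz : y ≠ z) :
    (dd2 Real.exp (-x) (-y) (-z) + dd2 Real.exp (-(x + y)) (-(x + z)) (-(y + z))) /
        ((1 - Real.exp (-x)) * (1 - Real.exp (-y)) * (1 - Real.exp (-z))) =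
      (dd1 Real.exp x y * dd1 Real.exp y z - (Real.exp y - 1) * dd2 Real.exp x y z) /
        ((Real.exp x - 1) * (Real.exp y - 1) * (Real.exp z - 1)) := by
  have hden : (1 - Real.exp (-x)) * (1 - Real.exp (-y)) * (1 - Real.exp (-z)) =
      Real.exp (-(x + y + z)) * ((Real.exp x - 1) * (Real.exp y - 1) * (Real.exp z - 1)) := by
    simp only [Real.one_sub_exp_neg, neg_add, Real.exp_add]
    ring
  rw [dd2_exp_neg hxy hxz hyz, dd2_exp_neg_add_add, ← mul_add, hden,
    mul_div_mul_left _ _ (by positivity)]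
  ring

namespace Matrix

theorem exp_eq_of_mul_eq_mul_diagonal {n 𝔸 : Type*} [Fintype n] [DecidableEq n]
    [NormedCommRing 𝔸] [NormedAlgebra ℚ 𝔸] [CompleteSpace 𝔸]
    {M S S' : Matrix n n 𝔸} {d : n → 𝔸} (hS : S * S' = 1) (hMS : M * S = S * diagonal d) :
    NormedSpace.exp M = S * diagonal (fun i => NormedSpace.exp (d i)) * S' := by
  have hS' : S⁻¹ = S' := inv_eq_right_inv hS
  have hM : M = S * diagonal d * S⁻¹ := by
    rw [← hMS, hS', Matrix.mul_assoc, hS, Matrix.mul_one]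
  rw [hM, exp_conj _ _ ((isUnit_iff_isUnit_det S).2 (isUnit_det_of_right_inverse hS)),
    exp_diagonal, Pi.exp_def, hS']

theorem exp_lowerBidiagonal_fin_three {m₁ m₂ m₃ : ℝ} (p q : ℝ)
    (h12 : m₁ ≠ m₂) (h13 : m₁ ≠ m₃) (h23 : m₂ ≠ m₃) :
    NormedSpace.exp !![m₁, 0, 0; p, m₂, 0; 0, q, m₃] =
      !![Real.exp m₁, 0, 0;
        p * dd1 Real.exp m₁ m₂, Real.exp m₂, 0;
        p * q * dd2 Real.exp m₁ m₂ m₃, q * dd1 Real.exp m₂ m₃, Real.exp m₃] := by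
  -- the columns of `S` below are eigenvectors for `m₁, m₂, m₃`
  set c₁ := p / (m₁ - m₂)
  set c₃ := q / (m₂ - m₃)
  set c₂ := c₁ * q / (m₁ - m₃)
  have hS : !![1, 0, 0; c₁, 1, 0; c₂, c₃, 1] * !![1, 0, 0; -c₁, 1, 0; c₁ * c₃ - c₂, -c₃, 1]
      = (1 : Matrix (Fin 3) (Fin 3) ℝ) := by
    ext i j
    fin_cases i <;> fin_cases j <;> simp [Matrix.mul_apply, Fin.sum_univ_three]
    ring
  rw [exp_eq_of_mul_eq_mul_diagonal hS (d := ![m₁, m₂, m₃])]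
  · ext i j
    fin_cases i <;> fin_cases j <;>
      simp [Matrix.mul_apply, vecMul_diagonal, Fin.sum_univ_three, dd1, dd2, c₁, c₂, c₃,
        ← Real.exp_eq_exp_ℝ] <;>
      field_simp <;> ring
  · ext i j
    fin_cases i <;> fin_cases j <;> simp [Matrix.mul_apply, Fin.sum_univ_three, c₁, c₂, c₃] <;>
      field_simp <;> ring

theorem lowerTriangular_fin_three_inv_mulVec {K : Type*} [Field K] {n₁₁ n₂₂ n₃₃ : K}
    (n₂₁ n₃₁ n₃₂ : K) (h₁ : n₁₁ ≠ 0) (h₂ : n₂₂ ≠ 0) (h₃ : n₃₃ ≠ 0) :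
    (!![n₁₁, 0, 0; n₂₁, n₂₂, 0; n₃₁, n₃₂, n₃₃])⁻¹ *ᵥ ![1, 0, 0] =
      ![1 / n₁₁, -n₂₁ / (n₁₁ * n₂₂), (n₂₁ * n₃₂ - n₂₂ * n₃₁) / (n₁₁ * n₂₂ * n₃₃)] := by
  set N := !![n₁₁, 0, 0; n₂₁, n₂₂, 0; n₃₁, n₃₂, n₃₃]
  have hdet : IsUnit N.det := by
    simp [N, Matrix.det_fin_three, h₁, h₂, h₃]
  have hsol : N *ᵥ ![1 / n₁₁, -n₂₁ / (n₁₁ * n₂₂), (n₂₁ * n₃₂ - n₂₂ * n₃₁) / (n₁₁ * n₂₂ * n₃₃)]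
      = ![1, 0, 0] := by
    ext i
    fin_cases i <;> simp [N, Matrix.mulVec, dotProduct, Fin.sum_univ_three] <;> field_simp <;> ring
  rw [← hsol, mulVec_mulVec, nonsing_inv_mul _ hdet, one_mulVec]

theorem exp_lowerBidiagonal_fin_three_sub_one_inv_mulVec {m₁ m₂ m₃ : ℝ} (p q : ℝ)
    (h12 : m₁ ≠ m₂) (h13 : m₁ ≠ m₃) (h23 : m₂ ≠ m₃) (h₁ : m₁ ≠ 0) (h₂ : m₂ ≠ 0) (h₃ : m₃ ≠ 0) :
    (NormedSpace.exp !![m₁, 0, 0; p, m₂, 0; 0, q, m₃] - 1)⁻¹ *ᵥ ![1, 0, 0] =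
      ![1 / (Real.exp m₁ - 1),
        -p * (dd1 Real.exp m₁ m₂ / ((Real.exp m₁ - 1) * (Real.exp m₂ - 1))),
        p * q * ((dd1 Real.exp m₁ m₂ * dd1 Real.exp m₂ m₃ -
            (Real.exp m₂ - 1) * dd2 Real.exp m₁ m₂ m₃) /
          ((Real.exp m₁ - 1) * (Real.exp m₂ - 1) * (Real.exp m₃ - 1)))] := by
  have he {m : ℝ} (hm : m ≠ 0) : Real.exp m - 1 ≠ 0 :=
    sub_ne_zero.2 (mt (Real.exp_eq_one_iff m).1 hm)
  have hsub (a b c d e f : ℝ) : !![a, 0, 0; b, c, 0; d, e, f] - 1 =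
      !![a - 1, 0, 0; b, c - 1, 0; d, e, f - 1] := by
    ext i j; fin_cases i <;> fin_cases j <;> simp
  rw [exp_lowerBidiagonal_fin_three p q h12 h13 h23, hsub,
    lowerTriangular_fin_three_inv_mulVec _ _ _ (he h₁) (he h₂) (he h₃)]
  ext i; fin_cases i <;> simp <;> ring

end Matrix

/-- Closed-form expressions for the fixed point of the impulse-to-impulse map
of the IGO: with `A = [[−a₁,0,0],[g₁,−a₂,0],[0,g₂,−a₃]]` (pairwise distinct positive
`a₁,a₂,a₃`, `g₁,g₂ > 0`), `B = (1,0,0)ᵀ`, `T > 0` and `λ > 0`, the vector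
`X := λ·(exp(−T·A) − I)⁻¹·B` has the components given via divided differences of the
scalar exponential, and all its components are strictly positive. -/
theorem igo_fixed_point_formulas (a₁ a₂ a₃ g₁ g₂ : ℝ)
    (ha₁ : 0 < a₁) (ha₂ : 0 < a₂) (ha₃ : 0 < a₃)
    (h12 : a₁ ≠ a₂) (h13 : a₁ ≠ a₃) (h23 : a₂ ≠ a₃)
    (hg₁ : 0 < g₁) (hg₂ : 0 < g₂)
    (A : Matrix (Fin 3) (Fin 3) ℝ)
    (hA : A = !![-a₁, 0, 0; g₁, -a₂, 0; 0, g₂, -a₃])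
    (B : Fin 3 → ℝ) (hB : B = ![1, 0, 0])
    (T lam : ℝ) (hT : 0 < T) (hlam : 0 < lam)
    (X : Fin 3 → ℝ)
    (hX : X = lam • ((NormedSpace.exp ((-T) • A) - 1)⁻¹).mulVec B) :
    X 0 = lam * Real.exp (-a₁ * T) / (1 - Real.exp (-a₁ * T)) ∧
    X 1 = lam * g₁ * T * dd1 Real.exp (-a₁ * T) (-a₂ * T) /
        ((1 - Real.exp (-a₁ * T)) * (1 - Real.exp (-a₂ * T))) ∧
    X 2 = lam * g₁ * g₂ * T ^ 2 *
        (dd2 Real.exp (-a₁ * T) (-a₂ * T) (-a₃ * T) +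
          dd2 Real.exp (-(a₁ + a₂) * T) (-(a₁ + a₃) * T) (-(a₂ + a₃) * T)) /
        ((1 - Real.exp (-a₁ * T)) * (1 - Real.exp (-a₂ * T)) * (1 - Real.exp (-a₃ * T))) ∧
    (∀ i, 0 < X i) := by
  subst hA hB
  have hT' {a b : ℝ} (h : a ≠ b) : a * T ≠ b * T := (mul_left_injective₀ hT.ne').ne h
  have hM : (-T) • !![-a₁, 0, 0; g₁, -a₂, 0; 0, g₂, -a₃] =
      !![a₁ * T, 0, 0; -(g₁ * T), a₂ * T, 0; 0, -(g₂ * T), a₃ * T] := by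
    simp [Matrix.smul_of, mul_comm T]
  rw [hM, exp_lowerBidiagonal_fin_three_sub_one_inv_mulVec _ _ (hT' h12) (hT' h13) (hT' h23)
    (by positivity) (by positivity) (by positivity)] at hX
  have hx₁ : X 0 = lam * Real.exp (-a₁ * T) / (1 - Real.exp (-a₁ * T)) := by
    rw [mul_div_assoc, neg_mul, Real.exp_neg_div_one_sub_exp_neg, hX]
    simp only [Pi.smul_apply, cons_val, smul_eq_mul]
  have hx₂ : X 1 = lam * g₁ * T * dd1 Real.exp (-a₁ * T) (-a₂ * T) /
      ((1 - Real.exp (-a₁ * T)) * (1 - Real.exp (-a₂ * T))) := by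
    rw [mul_div_assoc, neg_mul, neg_mul, dd1_exp_neg_div, hX]
    simp only [Pi.smul_apply, cons_val, smul_eq_mul]
    ring
  have hx₃ : X 2 = lam * g₁ * g₂ * T ^ 2 *
      (dd2 Real.exp (-a₁ * T) (-a₂ * T) (-a₃ * T) +
        dd2 Real.exp (-(a₁ + a₂) * T) (-(a₁ + a₃) * T) (-(a₂ + a₃) * T)) /
      ((1 - Real.exp (-a₁ * T)) * (1 - Real.exp (-a₂ * T)) * (1 - Real.exp (-a₃ * T))) := by
    simp only [mul_div_assoc, neg_mul, add_mul]
    rw [dd2_exp_neg_add_dd2_exp_neg_add_add_div (hT' h12) (hT' h13) (hT' h23), hX]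
    simp only [Pi.smul_apply, cons_val, smul_eq_mul]
    ring
  have hne {a b : ℝ} (h : a ≠ b) : -a * T ≠ -b * T := hT' (neg_injective.ne h)
  have hden {a : ℝ} (ha : 0 < a) : 0 < 1 - Real.exp (-a * T) :=
    neg_mul a T ▸ Real.one_sub_exp_neg_pos (mul_pos ha hT)
  refine ⟨hx₁, hx₂, hx₃, fun i => ?_⟩
  fin_cases i
  · exact hx₁ ▸ div_pos (by positivity) (hden ha₁)
  · exact hx₂ ▸ div_pos
      (mul_pos (by positivity) (dd1_pos_of_strictMono Real.exp_strictMono (hne h12)))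
      (mul_pos (hden ha₁) (hden ha₂))
  · exact hx₃ ▸ div_pos (mul_pos (by positivity) (add_pos
      (dd2_pos_of_strictConvexOn strictConvexOn_exp (hne h12) (hne h13) (hne h23))
      (dd2_pos_of_strictConvexOn strictConvexOn_exp (hne (by grind)) (hne (by grind))
        (hne (by grind)))))
      (mul_pos (mul_pos (hden ha₁) (hden ha₂)) (hden ha₃))
end

section
/- Let a₁, a₂, a₃ be pairwise distinct positive reals, g₁, g₂ > 0, A = [[−a₁,0,0],[g₁,−a₂,0],[0,g₂,−a₃]], B = (1,0,0)ᵀ, T > 0 and λ ∈ ℝ. Then a vector X ∈ ℝ³ satisfies X = exp(T·A)(X + λ·B) if and only if X = λ · (exp(−T·A) − I)⁻¹ · B (the matrix exp(−T·A) − I being invertible for T > 0). -/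
/-!
`A` is lower triangular, and so is `exp (-T • A)`, with diagonal entries `exp (T aᵢ) ≠ 1`
(the diagonal of a power of a triangular matrix is the power of its diagonal); hence
`exp (-T • A) - 1` has nonzero determinant. As `exp (-T • A) = exp (T • A)⁻¹`, the fixed-point
equation `X = exp (T • A) (X + λ B)` is equivalent to `(exp (-T • A) - 1) X = λ B`.
-/

open Matrix

namespace Matrix

variable {n : Type*} [Fintype n]

section LowerTriangular

variable [LinearOrder n]

theorem IsLowerTriangular.mul_apply_self {R : Type*} [NonUnitalNonAssocSemiring R]
    {M N : Matrix n n R} (hM : M.IsLowerTriangular) (hN : N.IsLowerTriangular) (i : n) :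
    (M * N) i i = M i i * N i i := by
  rw [mul_apply]
  refine Finset.sum_eq_single i (fun k _ hki => ?_) (by simp)
  rcases hki.lt_or_gt with hki | hki
  · rw [hN hki, mul_zero]
  · rw [hM hki, zero_mul]

variable [DecidableEq n]

theorem IsLowerTriangular.pow_apply_self {R : Type*} [Semiring R] {M : Matrix n n R}
    (hM : M.IsLowerTriangular) (i : n) (k : ℕ) : (M ^ k) i i = M i i ^ k := by
  induction k with
  | zero => simp
  | succ k ih => rw [pow_succ, IsLowerTriangular.mul_apply_self (hM.pow k) hM, ih, pow_succ]

attribute [local instance] Matrix.linftyOpNormedRing Matrix.linftyOpNormedAlgebra in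
theorem IsLowerTriangular.exp_apply_self {𝕂 : Type*} [RCLike 𝕂] {M : Matrix n n 𝕂}
    (hM : M.IsLowerTriangular) (i : n) : NormedSpace.exp M i i = NormedSpace.exp (M i i) := by
  have hsum := Pi.hasSum.1 (NormedSpace.exp_series_hasSum_exp' (𝕂 := 𝕂) M).matrix_diag i
  refine hsum.unique ?_
  simp only [diag_apply, smul_apply, hM.pow_apply_self]
  exact NormedSpace.exp_series_hasSum_exp' (M i i)

theorem IsLowerTriangular.isUnit_exp_sub_one {M : Matrix n n ℝ} (hM : M.IsLowerTriangular)
    (hdiag : ∀ i, M i i ≠ 0) : IsUnit (NormedSpace.exp M - 1) := by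
  have htri : (NormedSpace.exp M - 1).IsLowerTriangular := hM.exp.sub blockTriangular_one
  rw [isUnit_iff_isUnit_det, det_of_isLowerTriangular _ htri, isUnit_iff_ne_zero]
  refine Finset.prod_ne_zero_iff.2 fun i _ => ?_
  simpa [hM.exp_apply_self, ← Real.exp_eq_exp_ℝ, sub_eq_zero] using hdiag i

end LowerTriangular

variable [DecidableEq n] {R : Type*} [CommRing R]

theorem eq_mulVec_iff_nonsing_inv_mulVec_eq {M : Matrix n n R} (hM : IsUnit M) {x y : n → R} :
    x = M *ᵥ y ↔ M⁻¹ *ᵥ x = y := by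
  have hdet := (isUnit_iff_isUnit_det M).1 hM
  constructor
  · rintro rfl
    rw [mulVec_mulVec, nonsing_inv_mul _ hdet, one_mulVec]
  · rintro rfl
    rw [mulVec_mulVec, mul_nonsing_inv _ hdet, one_mulVec]

theorem eq_mulVec_add_iff_eq_inv_sub_one_mulVec {U : Matrix n n R} (hU : IsUnit U)
    (hU' : IsUnit (U⁻¹ - 1)) (x b : n → R) :
    x = U *ᵥ (x + b) ↔ x = (U⁻¹ - 1)⁻¹ *ᵥ b := by
  rw [eq_mulVec_iff_nonsing_inv_mulVec_eq hU, eq_comm (b := (U⁻¹ - 1)⁻¹ *ᵥ b),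
    ← eq_mulVec_iff_nonsing_inv_mulVec_eq hU', sub_mulVec, one_mulVec, eq_sub_iff_add_eq', eq_comm]

end Matrix

theorem igo_one_cycle_fixed_point_characterization_general (a₁ a₂ a₃ g₁ g₂ : ℝ)
    (ha₁ : 0 < a₁) (ha₂ : 0 < a₂) (ha₃ : 0 < a₃)
    (A : Matrix (Fin 3) (Fin 3) ℝ)
    (hA : A = !![-a₁, 0, 0; g₁, -a₂, 0; 0, g₂, -a₃])
    (B : Fin 3 → ℝ)
    (T lam : ℝ) (hT : 0 < T) :
    IsUnit (NormedSpace.exp ((-T) • A) - 1) ∧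
    (∀ X : Fin 3 → ℝ,
      X = (NormedSpace.exp (T • A)).mulVec (X + lam • B) ↔
      X = lam • ((NormedSpace.exp ((-T) • A) - 1)⁻¹).mulVec B) := by
  have htri : ((-T) • A).IsLowerTriangular := by
    intro i j (hij : i < j)
    subst hA
    fin_cases i <;> fin_cases j <;> simp_all
  have hdiag : ∀ i, ((-T) • A) i i ≠ 0 := by
    subst hA
    intro i
    fin_cases i <;> simp [hT.ne', ha₁.ne', ha₂.ne', ha₃.ne']
  have hunit := htri.isUnit_exp_sub_one hdiag
  refine ⟨hunit, fun X => ?_⟩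
  rw [neg_smul, Matrix.exp_neg] at hunit ⊢
  rw [← mulVec_smul]
  exact eq_mulVec_add_iff_eq_inv_sub_one_mulVec (isUnit_exp (T • A)) hunit X (lam • B)

/-- With `A = [[−a₁,0,0],[g₁,−a₂,0],[0,g₂,−a₃]]` (pairwise distinct positive
`a₁,a₂,a₃`, `g₁,g₂ > 0`), `B = (1,0,0)ᵀ`, `T > 0` and `λ ∈ ℝ`, the matrix `exp(−T·A) − I`
is invertible, and a vector `X ∈ ℝ³` satisfies `X = exp(T·A)(X + λ·B)` if and only if
`X = λ·(exp(−T·A) − I)⁻¹·B`. -/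
theorem igo_one_cycle_fixed_point_characterization (a₁ a₂ a₃ g₁ g₂ : ℝ)
    (ha₁ : 0 < a₁) (ha₂ : 0 < a₂) (ha₃ : 0 < a₃)
    (h12 : a₁ ≠ a₂) (h13 : a₁ ≠ a₃) (h23 : a₂ ≠ a₃)
    (hg₁ : 0 < g₁) (hg₂ : 0 < g₂)
    (A : Matrix (Fin 3) (Fin 3) ℝ)
    (hA : A = !![-a₁, 0, 0; g₁, -a₂, 0; 0, g₂, -a₃])
    (B : Fin 3 → ℝ) (hB : B = ![1, 0, 0])
    (T lam : ℝ) (hT : 0 < T) :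
    IsUnit (NormedSpace.exp ((-T) • A) - 1) ∧
    (∀ X : Fin 3 → ℝ,
      X = (NormedSpace.exp (T • A)).mulVec (X + lam • B) ↔
      X = lam • ((NormedSpace.exp ((-T) • A) - 1)⁻¹).mulVec B) :=
  igo_one_cycle_fixed_point_characterization_general a₁ a₂ a₃ g₁ g₂ ha₁ ha₂ ha₃ A hA B T lam hT
end

section
/- The function ν(z) := z/(e^{−z} − 1) is strictly negative, strictly decreasing, and strictly concave on the interval (−∞, 0). -/
/-!
Substituting `w = -z > 0`, one finds `ν'(z) = -((w - 1) eʷ + 1) / (eʷ - 1)²` and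
`ν''(z) = -eʷ ((w - 2) eʷ + w + 2) / (eʷ - 1)³`. Both numerators `(w - 1) eʷ + 1` and
`(w - 2) eʷ + w + 2` vanish at `w = 0`, and the derivative of each is positive on `(0, ∞)`:
it is `w eʷ` for the first and the first numerator itself for the second.
-/

open Real Set

lemma pos_of_hasDerivAt_pos {f f' : ℝ → ℝ} (hf : ∀ x, HasDerivAt f (f' x) x) (hf0 : f 0 = 0)
    (hf' : ∀ x, 0 < x → 0 < f' x) {w : ℝ} (hw : 0 < w) : 0 < f w := by
  have hmono : StrictMonoOn f (Ici 0) := by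
    refine strictMonoOn_of_deriv_pos (convex_Ici 0)
      (fun x _ => (hf x).continuousAt.continuousWithinAt) fun x hx => ?_
    rw [interior_Ici] at hx
    rw [(hf x).deriv]
    exact hf' x hx
  simpa [hf0] using hmono self_mem_Ici hw.le hw

lemma sub_one_mul_exp_add_one_pos {w : ℝ} (hw : 0 < w) : 0 < (w - 1) * exp w + 1 := by
  refine pos_of_hasDerivAt_pos (f := fun x => (x - 1) * exp x + 1) (f' := fun x => x * exp x)
    (fun x => ?_) (by simp) (fun x hx => mul_pos hx (exp_pos x)) hw
  exact ((((hasDerivAt_id' x).sub_const 1).mul (hasDerivAt_exp x)).add_const 1).congr_deriv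
    (by ring)

lemma sub_two_mul_exp_add_add_two_pos {w : ℝ} (hw : 0 < w) :
    0 < (w - 2) * exp w + w + 2 := by
  refine pos_of_hasDerivAt_pos (f := fun x => (x - 2) * exp x + x + 2)
    (f' := fun x => (x - 1) * exp x + 1) (fun x => ?_) (by norm_num)
    (fun x hx => sub_one_mul_exp_add_one_pos hx) hw
  exact (((((hasDerivAt_id' x).sub_const 2).mul (hasDerivAt_exp x)).add
    (hasDerivAt_id' x)).add_const 2).congr_deriv (by ring)

lemma exp_neg_sub_one_ne_zero {z : ℝ} (hz : z ≠ 0) : exp (-z) - 1 ≠ 0 :=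
  sub_ne_zero.mpr (by simpa using hz)

lemma exp_neg_sub_one_pos {z : ℝ} (hz : z < 0) : 0 < exp (-z) - 1 :=
  sub_pos.mpr (one_lt_exp_iff.mpr (neg_pos.mpr hz))

lemma hasDerivAt_exp_neg (z : ℝ) : HasDerivAt (fun z => exp (-z)) (-exp (-z)) z := by
  simpa using (hasDerivAt_neg z).exp

noncomputable def nu (z : ℝ) : ℝ := z / (exp (-z) - 1)

noncomputable def nuDeriv (z : ℝ) : ℝ :=
  -((-z - 1) * exp (-z) + 1) / (exp (-z) - 1) ^ 2

noncomputable def nuDeriv2 (z : ℝ) : ℝ :=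
  -(exp (-z) * ((-z - 2) * exp (-z) + -z + 2)) / (exp (-z) - 1) ^ 3

lemma hasDerivAt_nu {z : ℝ} (hz : z ≠ 0) : HasDerivAt nu (nuDeriv z) z := by
  have hD := exp_neg_sub_one_ne_zero hz
  refine ((hasDerivAt_id' z).div ((hasDerivAt_exp_neg z).sub_const 1) hD).congr_deriv ?_
  simp only [nuDeriv]
  field_simp
  ring

lemma hasDerivAt_nuDeriv {z : ℝ} (hz : z ≠ 0) : HasDerivAt nuDeriv (nuDeriv2 z) z := by
  have hD := exp_neg_sub_one_ne_zero hz
  have hE := hasDerivAt_exp_neg z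
  have hnum := ((((hasDerivAt_neg' z).sub_const 1).fun_mul hE).add_const 1).fun_neg
  refine (hnum.div ((hE.sub_const 1).fun_pow 2) (pow_ne_zero 2 hD)).congr_deriv ?_
  simp only [nuDeriv2]
  field_simp
  ring

lemma iterate_deriv_two_nu {z : ℝ} (hz : z ≠ 0) : deriv^[2] nu z = nuDeriv2 z := by
  have hderiv : deriv nu =ᶠ[nhds z] nuDeriv := by
    filter_upwards [isOpen_ne.mem_nhds hz] with y hy using (hasDerivAt_nu hy).deriv
  simpa using hderiv.deriv_eq.trans (hasDerivAt_nuDeriv hz).deriv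

lemma nu_neg {z : ℝ} (hz : z < 0) : nu z < 0 :=
  div_neg_of_neg_of_pos hz (exp_neg_sub_one_pos hz)

lemma nuDeriv_neg {z : ℝ} (hz : z < 0) : nuDeriv z < 0 :=
  div_neg_of_neg_of_pos (neg_neg_of_pos (sub_one_mul_exp_add_one_pos (neg_pos.mpr hz)))
    (pow_pos (exp_neg_sub_one_pos hz) 2)

lemma nuDeriv2_neg {z : ℝ} (hz : z < 0) : nuDeriv2 z < 0 :=
  div_neg_of_neg_of_pos
    (neg_neg_of_pos (mul_pos (exp_pos _) (sub_two_mul_exp_add_add_two_pos (neg_pos.mpr hz))))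
    (pow_pos (exp_neg_sub_one_pos hz) 3)

lemma continuousOn_nu : ContinuousOn nu (Iio 0) :=
  fun _ hz => (hasDerivAt_nu (ne_of_lt hz)).continuousAt.continuousWithinAt

lemma nu_strictAntiOn : StrictAntiOn nu (Iio 0) := by
  refine strictAntiOn_of_deriv_neg (convex_Iio 0) continuousOn_nu fun z hz => ?_
  rw [interior_Iio] at hz
  rw [(hasDerivAt_nu (ne_of_lt hz)).deriv]
  exact nuDeriv_neg hz

lemma nu_strictConcaveOn : StrictConcaveOn ℝ (Iio 0) nu := by
  refine strictConcaveOn_of_deriv2_neg (convex_Iio 0) continuousOn_nu fun z hz => ?_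
  rw [interior_Iio] at hz
  rw [iterate_deriv_two_nu (ne_of_lt hz)]
  exact nuDeriv2_neg hz

/-- The function `ν(z) := z/(e^{−z} − 1)` is strictly negative, strictly
decreasing, and strictly concave on the interval `(−∞, 0)`. -/
theorem nu_neg_strictAnti_strictConcave :
    (∀ z : ℝ, z < 0 → z / (Real.exp (-z) - 1) < 0) ∧
    StrictAntiOn (fun z : ℝ => z / (Real.exp (-z) - 1)) (Set.Iio 0) ∧
    StrictConcaveOn ℝ (Set.Iio 0) (fun z : ℝ => z / (Real.exp (-z) - 1)) :=
  ⟨fun _ hz => nu_neg hz, nu_strictAntiOn, nu_strictConcaveOn⟩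
end

section
/- Let A be a 3×3 real matrix and let M(A) denote the sum of its three 2×2 principal minors, M(A) = (a₂₂a₃₃ − a₂₃a₃₂) + (a₁₁a₃₃ − a₃₁a₁₃) + (a₁₁a₂₂ − a₂₁a₁₂). Then A is Schur stable (every complex eigenvalue of A has modulus strictly less than 1) if and only if the following three conditions hold: (1) |det A| < 1; (2) |tr A + det A| < 1 + M(A); (3) |tr A · det A − M(A)| < 1 − (det A)². -/
/-!
The eigenvalues of `A` are the roots of `z³ - (tr A) z² + M(A) z - det A`. A real cubic has a
real root `r`, so it factors as `(z - r)(z² - s z + p)` with real `s`, `p`, and all its roots lie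
in the unit disk iff `|r| < 1` and `|p| < 1`, `|s| < 1 + p` (the Schur–Cohn conditions for the
quadratic factor: its roots are either real, or a conjugate pair of modulus `√p`). Substituting
`tr A = r + s`, `M(A) = p + r s`, `det A = r p`, conditions (2) and (3) factor into products of
`1 ± r`, `1 ± s + p`, `1 ± p`, and these real inequalities are equivalent to the former ones.
-/

open Matrix

/-- The sum of the three `2×2` principal minors of a `3×3` real matrix. -/
def principalMinorsSum (A : Matrix (Fin 3) (Fin 3) ℝ) : ℝ :=
  (A 1 1 * A 2 2 - A 1 2 * A 2 1) + (A 0 0 * A 2 2 - A 2 0 * A 0 2) +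
    (A 0 0 * A 1 1 - A 1 0 * A 0 1)

theorem mem_spectrum_map_ofReal_fin_three (A : Matrix (Fin 3) (Fin 3) ℝ) (μ : ℂ) :
    μ ∈ spectrum ℂ (A.map Complex.ofReal) ↔
      μ ^ 3 - A.trace * μ ^ 2 + principalMinorsSum A * μ - A.det = 0 := by
  have hdet : (algebraMap ℂ _ μ - A.map Complex.ofReal).det =
      μ ^ 3 - A.trace * μ ^ 2 + principalMinorsSum A * μ - A.det := by
    simp only [det_fin_three, trace_fin_three, Matrix.sub_apply, algebraMap_matrix_apply,
      map_apply, principalMinorsSum, Algebra.algebraMap_self, RingHom.id_apply, ↓reduceIte,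
      Fin.reduceEq]
    push_cast
    ring
  rw [spectrum.mem_iff, isUnit_iff_isUnit_det, isUnit_iff_ne_zero, not_not, hdet]

theorem exists_cubic_eq_zero (a b c : ℝ) : ∃ x : ℝ, x ^ 3 - a * x ^ 2 + b * x - c = 0 := by
  let f : ℝ → ℝ := fun x ↦ x ^ 3 - a * x ^ 2 + b * x - c
  set M := 1 + |a| + |b| + |c|
  have hM : 1 ≤ M := by linarith [abs_nonneg a, abs_nonneg b, abs_nonneg c]
  have hM₂ : M ≤ M ^ 2 := by nlinarith
  have hb : |b| * M ≤ |b| * M ^ 2 := mul_le_mul_of_nonneg_left hM₂ (abs_nonneg b)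
  have hc : |c| ≤ |c| * M ^ 2 := le_mul_of_one_le_right (abs_nonneg c) (by nlinarith)
  have hf_neg : f (-M) ≤ 0 := by
    simp only [f]
    nlinarith [mul_le_mul_of_nonneg_right (neg_abs_le a) (sq_nonneg M),
      mul_le_mul_of_nonneg_right (neg_abs_le b) (by linarith : 0 ≤ M), neg_abs_le c]
  have hf_pos : 0 ≤ f M := by
    simp only [f]
    nlinarith [mul_le_mul_of_nonneg_right (le_abs_self a) (sq_nonneg M),
      mul_le_mul_of_nonneg_right (neg_abs_le b) (by linarith : 0 ≤ M), le_abs_self c]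
  obtain ⟨x, -, hx⟩ := intermediate_value_Icc (by linarith)
    (by fun_prop : Continuous f).continuousOn ⟨hf_neg, hf_pos⟩
  exact ⟨x, hx⟩

theorem forall_sub_mul_eq_zero_imp_iff {R : Type*} [Ring R] [NoZeroDivisors R] (P : R → Prop)
    (r : R) (q : R → R) :
    (∀ z, (z - r) * q z = 0 → P z) ↔ P r ∧ ∀ z, q z = 0 → P z := by
  simp only [mul_eq_zero, sub_eq_zero, or_imp, forall_and, forall_eq]

theorem Complex.re_eq_and_normSq_eq_of_quadratic_eq_zero {s p : ℝ} {z : ℂ}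
    (hz : z ^ 2 - s * z + p = 0) (him : z.im ≠ 0) : s = 2 * z.re ∧ p = normSq z := by
  have hre := congrArg re hz
  have him' := congrArg im hz
  simp only [sq, sub_re, add_re, mul_re, ofReal_re, ofReal_im, sub_im, add_im, mul_im, zero_re,
    zero_im] at hre him'
  have hs : s = 2 * z.re := by
    have : (2 * z.re - s) * z.im = 0 := by linear_combination him'
    linarith [(mul_eq_zero.1 this).resolve_right him]
  refine ⟨hs, ?_⟩
  rw [normSq_apply]
  subst hs
  linear_combination hre

theorem abs_lt_one_of_quadratic_eq_zero {s p x : ℝ} (hx : x ^ 2 - s * x + p = 0)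
    (hp : p < 1) (hs : |s| < 1 + p) : |x| < 1 := by
  obtain ⟨hs₁, hs₂⟩ := abs_lt.1 hs
  rw [abs_lt]
  constructor <;> by_contra! h
  · nlinarith [mul_nonneg (by linarith : 0 ≤ -1 - x) (by linarith : 0 ≤ 1 - s - x)]
  · nlinarith [mul_nonneg (by linarith : 0 ≤ x - 1) (by linarith : 0 ≤ x + 1 - s)]

theorem quadratic_roots_norm_lt_one_iff (s p : ℝ) :
    (∀ z : ℂ, z ^ 2 - s * z + p = 0 → ‖z‖ < 1) ↔ |p| < 1 ∧ |s| < 1 + p := by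
  constructor
  · intro h
    obtain ⟨w, hw⟩ := IsAlgClosed.exists_eq_mul_self (discrim 1 (-s : ℂ) p)
    obtain ⟨u, hu⟩ := exists_quadratic_eq_zero one_ne_zero ⟨w, hw⟩
    have hu' : u ^ 2 - s * u + p = 0 := by linear_combination hu
    by_cases him : u.im = 0
    · have hu_re : u = u.re := Complex.ext rfl (by simp [him])
      set x := u.re
      have hx : x ^ 2 - s * x + p = 0 := by exact_mod_cast hu_re ▸ hu'
      have hy : (s - x) ^ 2 - s * (s - x) + p = 0 := by linear_combination hx
      have hx₁ := h x (by exact_mod_cast hx)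
      have hy₁ := h (s - x : ℝ) (by exact_mod_cast hy)
      rw [Complex.norm_real, Real.norm_eq_abs] at hx₁ hy₁
      have hp : p = x * (s - x) := by linear_combination hx
      obtain ⟨hx₂, hx₃⟩ := abs_lt.1 hx₁
      obtain ⟨hy₂, hy₃⟩ := abs_lt.1 hy₁
      refine ⟨?_, abs_lt.2 ⟨?_, ?_⟩⟩
      · rw [hp, abs_mul]; exact mul_lt_one_of_nonneg_of_lt_one_left (abs_nonneg x) hx₁ hy₁.le
      · nlinarith [mul_pos (by linarith : 0 < 1 + x) (by linarith : 0 < 1 + (s - x))]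
      · nlinarith [mul_pos (by linarith : 0 < 1 - x) (by linarith : 0 < 1 - (s - x))]
    · obtain ⟨hs, hp⟩ := Complex.re_eq_and_normSq_eq_of_quadratic_eq_zero hu' him
      have hnorm := h u hu'
      rw [← Complex.sq_norm] at hp
      have : |s| ≤ 2 * ‖u‖ := by
        rw [hs, abs_mul, abs_two]
        exact mul_le_mul_of_nonneg_left (Complex.abs_re_le_norm u) zero_le_two
      refine ⟨?_, ?_⟩
      · rw [hp, abs_sq]; nlinarith [norm_nonneg u]
      · nlinarith [sq_pos_of_pos (sub_pos.2 hnorm)]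
  · rintro ⟨hp, hs⟩ z hz
    by_cases him : z.im = 0
    · have hz_re : z = z.re := Complex.ext rfl (by simp [him])
      rw [hz_re] at hz ⊢
      rw [Complex.norm_real, Real.norm_eq_abs]
      exact abs_lt_one_of_quadratic_eq_zero (by exact_mod_cast hz) (abs_lt.1 hp).2 hs
    · have hp' := (Complex.re_eq_and_normSq_eq_of_quadratic_eq_zero hz him).2
      rw [← Complex.sq_norm] at hp'
      nlinarith [norm_nonneg z, (abs_lt.1 hp).2]

-- `1 - r s + r² p ≥ (1 - |r|)(1 - |r| p)`.
theorem one_sub_mul_add_sq_mul_pos {r s p : ℝ} (hr : |r| < 1) (hrp : |r * p| < 1)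
    (hs : |s| ≤ 1 + p) : 0 < 1 - r * s + r ^ 2 * p := by
  have hrs : r * s ≤ |r| * (1 + p) :=
    (le_abs_self _).trans (abs_mul r s ▸ mul_le_mul_of_nonneg_left hs (abs_nonneg r))
  have hrp' : |r| * p < 1 :=
    (mul_le_mul_of_nonneg_left (le_abs_self p) (abs_nonneg r)).trans_lt (abs_mul r p ▸ hrp)
  rw [← sq_abs r]
  nlinarith [mul_pos (sub_pos.2 hr) (sub_pos.2 hrp')]

theorem lt_one_of_jury_conditions {r s p : ℝ} (hrp : |r * p| < 1)
    (h₁ : 0 < (1 - r) * (1 - s + p)) (h₂ : 0 < (1 - p) * (1 - r * s + r ^ 2 * p)) : r < 1 := by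
  by_contra! hr
  have hr' : 1 < r := hr.lt_of_ne fun h ↦ by simp [← h] at h₁
  have hs : 1 + p < s := by linarith [neg_of_mul_pos_right h₁ (by linarith)]
  have hp : |p| < 1 := by
    nlinarith [abs_mul r p, abs_of_pos (one_pos.trans hr'), abs_nonneg p]
  have hq : 0 < 1 - r * s + r ^ 2 * p := pos_of_mul_pos_right h₂ (by linarith [le_abs_self p])
  nlinarith [abs_lt.1 hrp, mul_pos (one_pos.trans hr') (sub_pos.2 hs)]

/- For `a = r + s`, `b = p + r s`, `c = r p`:
`1 + b ∓ (a + c) = (1 ∓ r)(1 ∓ s + p)`, `1 - c² + (a c - b) = (1 - p)(1 - r s + r² p)` and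
`1 - c² - (a c - b) = (1 + p)(1 - r² p) + r s (1 - p)`. -/
theorem jury_conditions_iff (r s p : ℝ) :
    (|r| < 1 ∧ |p| < 1 ∧ |s| < 1 + p) ↔
      (|r * p| < 1 ∧ |(r + s) + r * p| < 1 + (p + r * s) ∧
        |(r + s) * (r * p) - (p + r * s)| < 1 - (r * p) ^ 2) := by
  constructor
  · rintro ⟨hr, hp, hs⟩
    have hrp : |r * p| < 1 := by
      rw [abs_mul]; exact mul_lt_one_of_nonneg_of_lt_one_left (abs_nonneg r) hr hp.le
    obtain ⟨hr₁, hr₂⟩ := abs_lt.1 hr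
    obtain ⟨hp₁, hp₂⟩ := abs_lt.1 hp
    obtain ⟨hs₁, hs₂⟩ := abs_lt.1 hs
    have hrs : -(|r| * (1 + p)) * (1 - p) ≤ r * s * (1 - p) := by
      refine mul_le_mul_of_nonneg_right ((neg_le_neg ?_).trans (neg_abs_le _)) (by linarith)
      exact abs_mul r s ▸ mul_le_mul_of_nonneg_left hs.le (abs_nonneg r)
    have hrp' : 0 < 1 + |r| * p := by nlinarith [abs_nonneg r]
    refine ⟨hrp, abs_lt.2 ⟨?_, ?_⟩, abs_lt.2 ⟨?_, ?_⟩⟩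
    · nlinarith [mul_pos (by linarith : 0 < 1 + r) (by linarith : 0 < 1 + s + p)]
    · nlinarith [mul_pos (by linarith : 0 < 1 - r) (by linarith : 0 < 1 - s + p)]
    · nlinarith [mul_pos (by linarith : 0 < 1 - p) (one_sub_mul_add_sq_mul_pos hr hrp hs.le)]
    · have := mul_pos (mul_pos (by linarith : 0 < 1 + p) (sub_pos.2 hr)) hrp'
      linear_combination this + hrs - (1 + p) * p * sq_abs r
  · rintro ⟨hrp, h₂, h₃⟩
    obtain ⟨h₂₁, h₂₂⟩ := abs_lt.1 h₂
    obtain ⟨h₃₁, h₃₂⟩ := abs_lt.1 h₃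
    have hP₁ : 0 < (1 - r) * (1 - s + p) := by linarith
    have hP₂ : 0 < (1 + r) * (1 + s + p) := by linarith
    have hQ : 0 < (1 - p) * (1 - r * s + r ^ 2 * p) := by linarith
    -- the hypotheses are invariant under `(r, s) ↦ (-r, -s)`
    have hr : |r| < 1 := abs_lt.2
      ⟨neg_lt.1 <| lt_one_of_jury_conditions (s := -s) (by simpa using hrp) (by linarith)
        (by linarith), lt_one_of_jury_conditions hrp hP₁ hQ⟩
    have hs : |s| < 1 + p := abs_lt.2
      ⟨by linarith [pos_of_mul_pos_right hP₂ (by linarith [abs_lt.1 hr])],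
       by linarith [pos_of_mul_pos_right hP₁ (by linarith [abs_lt.1 hr])]⟩
    refine ⟨hr, abs_lt.2 ⟨by linarith [abs_nonneg s], ?_⟩, hs⟩
    by_contra! hp
    have hp' : 1 < p := hp.lt_of_ne fun h ↦ by simp [← h] at hQ
    linarith [neg_of_mul_pos_right hQ (by linarith), one_sub_mul_add_sq_mul_pos hr hrp hs.le]

theorem cubic_roots_norm_lt_one_iff (a b c : ℝ) :
    (∀ z : ℂ, z ^ 3 - a * z ^ 2 + b * z - c = 0 → ‖z‖ < 1) ↔
      |c| < 1 ∧ |a + c| < 1 + b ∧ |a * c - b| < 1 - c ^ 2 := by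
  obtain ⟨r, hr⟩ := exists_cubic_eq_zero a b c
  obtain ⟨s, p, rfl, rfl, rfl⟩ : ∃ s p, a = r + s ∧ b = p + r * s ∧ c = r * p :=
    ⟨a - r, b - r * (a - r), by ring, by ring, by linear_combination -hr⟩
  have hfactor : ∀ z : ℂ, z ^ 3 - ↑(r + s) * z ^ 2 + ↑(p + r * s) * z - ↑(r * p) =
      (z - r) * (z ^ 2 - s * z + p) := fun z ↦ by push_cast; ring
  simp only [hfactor, forall_sub_mul_eq_zero_imp_iff (‖·‖ < 1), Complex.norm_real,
    Real.norm_eq_abs, quadratic_roots_norm_lt_one_iff, jury_conditions_iff]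

/-- Schur stability criterion for a `3×3` real matrix: all complex
eigenvalues of `A` have modulus strictly less than `1` if and only if
(1) `|det A| < 1`, (2) `|tr A + det A| < 1 + M(A)`, and
(3) `|tr A · det A − M(A)| < 1 − (det A)²`, where `M(A)` is the sum of the three `2×2`
principal minors of `A`. -/
theorem schur_stability_criterion_3x3 (A : Matrix (Fin 3) (Fin 3) ℝ) :
    (∀ μ ∈ spectrum ℂ (A.map (Complex.ofReal : ℝ → ℂ)), ‖μ‖ < 1) ↔
    (|A.det| < 1 ∧
     |A.trace + A.det| < 1 + principalMinorsSum A ∧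
     |A.trace * A.det - principalMinorsSum A| < 1 - A.det ^ 2) := by
  simp only [mem_spectrum_map_ofReal_fin_three]
  exact cubic_roots_norm_lt_one_iff A.trace (principalMinorsSum A) A.det
end

section
/- Let a₁, a₂, a₃ be pairwise distinct positive reals, g₁, g₂ > 0, A = [[−a₁,0,0],[g₁,−a₂,0],[0,g₂,−a₃]], C = (0,0,1), and T > 0. Then the pair (exp(T·A), C) is observable: the 3×3 observability matrix whose rows are C, C·exp(T·A), and C·exp(2T·A) is invertible. -/
/-!
If `M * P = P * diagonal d`, the observability matrix with rows `C * M ^ k` satisfies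
`O * P = (vandermonde d)ᵀ * diagonal (C * P)`, so `O` is invertible once the `d i` are distinct
and no entry of `C * P` vanishes. For the cascade matrix `A` the eigenvalues `-aᵢ` are distinct,
the lower-triangular eigenvector matrix `P` has last row `(g₁ g₂, g₂, 1)`, and `exp (T • A)` is
diagonalised by the same `P` with the distinct eigenvalues `exp (-T aᵢ)`.
-/

open Matrix

namespace Matrix

section Observability

variable {K : Type*} [Field K] {n : ℕ}

def observabilityMatrix (C : Fin n → K) (M : Matrix (Fin n) (Fin n) K) :
    Matrix (Fin n) (Fin n) K :=
  of fun k => C ᵥ* M ^ (k : ℕ)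

theorem observabilityMatrix_fin_three (C : Fin 3 → K) (M : Matrix (Fin 3) (Fin 3) K) :
    observabilityMatrix C M = of ![C, C ᵥ* M, C ᵥ* M ^ 2] := by
  ext k : 1
  fin_cases k <;> simp [observabilityMatrix]

theorem observabilityMatrix_mul_of_mul_eq_mul_diagonal {C : Fin n → K}
    {M P : Matrix (Fin n) (Fin n) K} {d : Fin n → K} (hMP : M * P = P * diagonal d) :
    observabilityMatrix C M * P = (vandermonde d)ᵀ * diagonal (C ᵥ* P) := by
  have hpow (k : ℕ) : M ^ k * P = P * diagonal (d ^ k) := by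
    rw [← diagonal_pow]
    exact ((show SemiconjBy P (diagonal d) M from hMP.symm).pow_right k).symm
  ext k i
  have hrow : (observabilityMatrix C M * P) k = C ᵥ* P ᵥ* diagonal (d ^ (k : ℕ)) := by
    rw [vecMul_vecMul, ← hpow, ← vecMul_vecMul]
    rfl
  rw [hrow, vecMul_diagonal, mul_diagonal, transpose_apply, vandermonde_apply, Pi.pow_apply,
    mul_comm]

theorem isUnit_observabilityMatrix_of_mul_eq_mul_diagonal {C : Fin n → K}
    {M P : Matrix (Fin n) (Fin n) K} {d : Fin n → K} (hMP : M * P = P * diagonal d)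
    (hd : Function.Injective d) (hC : ∀ i, (C ᵥ* P) i ≠ 0) :
    IsUnit (observabilityMatrix C M) := by
  have hdet := congrArg det (observabilityMatrix_mul_of_mul_eq_mul_diagonal (C := C) hMP)
  rw [det_mul, det_mul, det_transpose, det_diagonal] at hdet
  have hne : det (observabilityMatrix C M) * det P ≠ 0 := by
    rw [hdet]
    exact mul_ne_zero (det_vandermonde_ne_zero_iff.mpr hd)
      (Finset.prod_ne_zero_iff.mpr fun i _ => hC i)
  exact (isUnit_iff_isUnit_det _).mpr (isUnit_iff_ne_zero.mpr (left_ne_zero_of_mul hne))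

end Observability

section Exponential

variable {m 𝔸 : Type*} [Fintype m] [DecidableEq m] [NormedRing 𝔸] [NormedAlgebra ℚ 𝔸]
  [CompleteSpace 𝔸]

theorem exp_mul_eq_mul_diagonal_exp {A P : Matrix m m 𝔸} {d : m → 𝔸} (hP : IsUnit P)
    (hAP : A * P = P * diagonal d) :
    NormedSpace.exp A * P = P * diagonal fun i => NormedSpace.exp (d i) := by
  obtain ⟨U, rfl⟩ := hP
  have hA : A = U * diagonal d * U⁻¹ := by
    rw [← hAP, Units.mul_inv_cancel_right]
  rw [hA, exp_units_conj, exp_diagonal, Pi.exp_def, Units.inv_mul_cancel_right]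

end Exponential

end Matrix

section Cascade

variable {R : Type*} [CommRing R] (a₁ a₂ a₃ g₁ g₂ : R)

def cascadeEigenvectors : Matrix (Fin 3) (Fin 3) R :=
  !![(a₂ - a₁) * (a₃ - a₁), 0, 0; g₁ * (a₃ - a₁), a₃ - a₂, 0; g₁ * g₂, g₂, 1]

theorem cascade_mul_cascadeEigenvectors :
    !![-a₁, 0, 0; g₁, -a₂, 0; 0, g₂, -a₃] * cascadeEigenvectors a₁ a₂ a₃ g₁ g₂ =
      cascadeEigenvectors a₁ a₂ a₃ g₁ g₂ * diagonal ![-a₁, -a₂, -a₃] := by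
  ext i j
  fin_cases i <;> fin_cases j <;>
    simp [cascadeEigenvectors, mul_apply, Fin.sum_univ_three] <;> ring

theorem det_cascadeEigenvectors :
    (cascadeEigenvectors a₁ a₂ a₃ g₁ g₂).det = (a₂ - a₁) * (a₃ - a₁) * (a₃ - a₂) := by
  simp [cascadeEigenvectors, det_fin_three]

theorem vecMul_cascadeEigenvectors :
    ![0, 0, 1] ᵥ* cascadeEigenvectors a₁ a₂ a₃ g₁ g₂ = ![g₁ * g₂, g₂, 1] := by
  ext j
  fin_cases j <;> simp [cascadeEigenvectors, vecMul, dotProduct, Fin.sum_univ_three]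

end Cascade

theorem igo_observability_general (a₁ a₂ a₃ g₁ g₂ : ℝ)
    (h12 : a₁ ≠ a₂) (h13 : a₁ ≠ a₃) (h23 : a₂ ≠ a₃)
    (hg₁ : 0 < g₁) (hg₂ : 0 < g₂)
    (A : Matrix (Fin 3) (Fin 3) ℝ)
    (hA : A = !![-a₁, 0, 0; g₁, -a₂, 0; 0, g₂, -a₃])
    (C : Fin 3 → ℝ) (hC : C = ![0, 0, 1])
    (T : ℝ) (hT : 0 < T) :
    IsUnit (Matrix.of
      ![C, Matrix.vecMul C (NormedSpace.exp (T • A)),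
        Matrix.vecMul C (NormedSpace.exp ((2 * T) • A))]) := by
  set E := cascadeEigenvectors a₁ a₂ a₃ g₁ g₂
  have hE : IsUnit E := by
    rw [isUnit_iff_isUnit_det, det_cascadeEigenvectors, isUnit_iff_ne_zero]
    exact mul_ne_zero (mul_ne_zero (sub_ne_zero.mpr h12.symm) (sub_ne_zero.mpr h13.symm))
      (sub_ne_zero.mpr h23.symm)
  have hexp := exp_mul_eq_mul_diagonal_exp hE (A := T • A)
    (by rw [smul_mul_assoc, hA, cascade_mul_cascadeEigenvectors, ← mul_smul_comm, ← diagonal_smul])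
  have hd : Function.Injective ![-a₁, -a₂, -a₃] := by
    simp [Function.Injective, Fin.forall_fin_succ, h12, h13, h23, h12.symm, h13.symm, h23.symm]
  rw [mul_smul, two_smul, ← two_nsmul, exp_nsmul, ← observabilityMatrix_fin_three]
  refine isUnit_observabilityMatrix_of_mul_eq_mul_diagonal hexp ?_ ?_
  · simp only [Pi.smul_apply, smul_eq_mul, ← Real.exp_eq_exp_ℝ]
    exact Real.exp_injective.comp ((mul_right_injective₀ hT.ne').comp hd)
  · rw [hC, vecMul_cascadeEigenvectors]
    intro i
    fin_cases i <;> simp [hg₁.ne', hg₂.ne']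

/-- Observability of the pair `(exp(T·A), C)` for the IGO: with
`A = [[−a₁,0,0],[g₁,−a₂,0],[0,g₂,−a₃]]` (pairwise distinct positive `a₁,a₂,a₃`,
`g₁,g₂ > 0`), `C = (0,0,1)` and `T > 0`, the `3×3` observability matrix with rows
`C`, `C·exp(T·A)` and `C·exp(2T·A)` is invertible. -/
theorem igo_observability (a₁ a₂ a₃ g₁ g₂ : ℝ)
    (ha₁ : 0 < a₁) (ha₂ : 0 < a₂) (ha₃ : 0 < a₃)
    (h12 : a₁ ≠ a₂) (h13 : a₁ ≠ a₃) (h23 : a₂ ≠ a₃)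
    (hg₁ : 0 < g₁) (hg₂ : 0 < g₂)
    (A : Matrix (Fin 3) (Fin 3) ℝ)
    (hA : A = !![-a₁, 0, 0; g₁, -a₂, 0; 0, g₂, -a₃])
    (C : Fin 3 → ℝ) (hC : C = ![0, 0, 1])
    (T : ℝ) (hT : 0 < T) :
    IsUnit (Matrix.of
      ![C, Matrix.vecMul C (NormedSpace.exp (T • A)),
        Matrix.vecMul C (NormedSpace.exp ((2 * T) • A))]) :=
  igo_observability_general a₁ a₂ a₃ g₁ g₂ h12 h13 h23 hg₁ hg₂ A hA C hC T hT
end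

section
/- Let z₀ > 0, k₂ > 0, d > 0, and let p be a real number with p > 4 z₀ d / k₂. Then there exist two distinct reals h₁ > 0 and h₂ > 0 such that, for each h ∈ {h₁, h₂}, the Hill-type function Φ_h(z) := k₂ · (z/h)^p / (1 + (z/h)^p), defined for z > 0, has derivative Φ_h′(z₀) = d. -/
/-! Writing `u = (z₀ / h) ^ p`, the slope of the Hill function at `z₀` is
`k₂ p u / (z₀ (1 + u)²)`, so `Φ_h'(z₀) = d` is the quadratic equation
`d z₀ u² + (2 d z₀ - k₂ p) u + d z₀ = 0` in `u`. Its discriminant is `k₂ p (k₂ p - 4 d z₀) > 0`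
and its roots have positive sum and product `1`, so there are two distinct positive roots `u`,
and `h = z₀ / u ^ (1 / p)` recovers two distinct scales. -/

open Real

theorem exists_two_pos_roots_of_quadratic {a b c : ℝ} (ha : 0 < a) (hb : b < 0) (hc : 0 < c)
    (hdisc : 0 < discrim a b c) :
    ∃ x y : ℝ, 0 < x ∧ 0 < y ∧ x ≠ y ∧
      a * (x * x) + b * x + c = 0 ∧ a * (y * y) + b * y + c = 0 := by
  set s := √(discrim a b c)
  have hs : 0 < s := sqrt_pos.mpr hdisc
  have hss : discrim a b c = s * s := (mul_self_sqrt hdisc.le).symm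
  have hs_lt : s < -b := by
    by_contra! h
    nlinarith [show discrim a b c = b ^ 2 - 4 * a * c from rfl]
  have hroot := quadratic_eq_zero_iff ha.ne' hss
  refine ⟨(-b + s) / (2 * a), (-b - s) / (2 * a), div_pos (by linarith) (by positivity),
    div_pos (by linarith) (by positivity), ?_, (hroot _).mpr (.inl rfl), (hroot _).mpr (.inr rfl)⟩
  rw [Ne, div_left_inj' (by positivity)]
  linarith

theorem hasDerivAt_hill {k₂ p h z : ℝ} (hh : 0 < h) (hz : 0 < z) :
    HasDerivAt (fun z : ℝ => k₂ * (z / h) ^ p / (1 + (z / h) ^ p))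
      (k₂ * p * (z / h) ^ p / (z * (1 + (z / h) ^ p) ^ 2)) z := by
  have hzh : 0 < z / h := div_pos hz hh
  have hpow : HasDerivAt (fun z : ℝ => (z / h) ^ p) (p * (z / h) ^ (p - 1) * (1 / h)) z := by
    exact (hasDerivAt_rpow_const (.inl hzh.ne')).comp z ((hasDerivAt_id z).div_const h)
  have hden : 1 + (z / h) ^ p ≠ 0 := by positivity
  refine ((hpow.const_mul k₂).div ((hasDerivAt_const z 1).add hpow) hden).congr_deriv ?_
  simp only [Pi.add_apply]
  rw [rpow_sub hzh, rpow_one]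
  field_simp
  ring

theorem rpow_div_div_rpow_inv {z u p : ℝ} (hz : z ≠ 0) (hu : 0 ≤ u) (hp : p ≠ 0) :
    (z / (z / u ^ p⁻¹)) ^ p = u := by
  rw [div_div_cancel₀ hz, rpow_inv_rpow hu hp]

theorem hasDerivAt_hill_of_quadratic {z₀ k₂ d p u : ℝ} (hz₀ : 0 < z₀) (hp : p ≠ 0) (hu : 0 < u)
    (hquad : d * z₀ * (u * u) + (2 * d * z₀ - k₂ * p) * u + d * z₀ = 0) :
    HasDerivAt (fun z : ℝ => k₂ * (z / (z₀ / u ^ p⁻¹)) ^ p / (1 + (z / (z₀ / u ^ p⁻¹)) ^ p))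
      d z₀ := by
  convert hasDerivAt_hill (k₂ := k₂) (div_pos hz₀ (rpow_pos_of_pos hu p⁻¹)) hz₀ using 1
  rw [rpow_div_div_rpow_inv hz₀.ne' hu.le hp]
  field_simp
  linarith

/-- Given `z₀ > 0`, `k₂ > 0`, `d > 0` and a real exponent
`p > 4 z₀ d / k₂`, there exist two distinct positive reals `h₁, h₂` such that for each
`h ∈ {h₁, h₂}`, the Hill-type function `Φ_h(z) := k₂·(z/h)^p/(1 + (z/h)^p)` has
derivative `d` at `z₀`. -/
theorem hill_function_slope_two_solutions (z₀ k₂ d p : ℝ)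
    (hz₀ : 0 < z₀) (hk₂ : 0 < k₂) (hd : 0 < d) (hp : 4 * z₀ * d / k₂ < p) :
    ∃ h₁ h₂ : ℝ, 0 < h₁ ∧ 0 < h₂ ∧ h₁ ≠ h₂ ∧
      ∀ h ∈ ({h₁, h₂} : Set ℝ),
        HasDerivAt (fun z : ℝ => k₂ * (z / h) ^ p / (1 + (z / h) ^ p)) d z₀ := by
  have hkp : 4 * z₀ * d < k₂ * p := by rwa [div_lt_iff₀' hk₂] at hp
  have hp₀ : 0 < p := lt_trans (by positivity) hp
  obtain ⟨u₁, u₂, hu₁, hu₂, hne, hquad₁, hquad₂⟩ :=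
    exists_two_pos_roots_of_quadratic (a := d * z₀) (b := 2 * d * z₀ - k₂ * p) (c := d * z₀)
      (by positivity) (by linarith [mul_pos hd hz₀]) (by positivity)
      (by rw [discrim]; nlinarith [mul_pos hk₂ hp₀])
  refine ⟨z₀ / u₁ ^ p⁻¹, z₀ / u₂ ^ p⁻¹, div_pos hz₀ (rpow_pos_of_pos hu₁ _),
    div_pos hz₀ (rpow_pos_of_pos hu₂ _), fun heq => hne ?_, ?_⟩
  · rw [← rpow_div_div_rpow_inv hz₀.ne' hu₁.le hp₀.ne', heq,
      rpow_div_div_rpow_inv hz₀.ne' hu₂.le hp₀.ne']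
  · rintro h (rfl | rfl)
    · exact hasDerivAt_hill_of_quadratic hz₀ hp₀.ne' hu₁ hquad₁
    · exact hasDerivAt_hill_of_quadratic hz₀ hp₀.ne' hu₂ hquad₂
end

section
/- Let a₁, a₂, a₃ be pairwise distinct positive reals, g₁, g₂ > 0, A = [[−a₁,0,0],[g₁,−a₂,0],[0,g₂,−a₃]], B = (1,0,0)ᵀ, C = (0,0,1). Let Φ : ℝ → ℝ satisfy Φ₁ ≤ Φ(z) ≤ Φ₂ for all z with 0 < Φ₁ ≤ Φ₂, and let F : ℝ → ℝ satisfy 0 < F₁ ≤ F(z) ≤ F₂ for all z. Define Q : ℝ³ → ℝ³ by Q(ξ) = exp(Φ(C·ξ)·A)(ξ + F(C·ξ)·B). Then for every initial vector ξ ∈ ℝ³, the forward orbit { Qⁿ(ξ) : n ∈ ℕ } is a bounded subset of ℝ³. -/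
/-!
The lower-triangular matrix `A` has the distinct eigenvalues `-a₁, -a₂, -a₃`, so `A = P D P⁻¹`
with `D` diagonal and `exp (τ • A) = P exp (τ • D) P⁻¹`. In the coordinates `η = P⁻¹ ξ` one step of
`Q` adds the bounded kick `F • P⁻¹ B` and then multiplies by `exp (τ • D)`, whose entries are at
most `ρ = maxᵢ exp (-Φ₁ aᵢ) < 1` since `τ ≥ Φ₁`. Hence `‖η‖` obeys `‖η'‖ ≤ ρ ‖η‖ + c`, which keeps
it below `max ‖η₀‖ (c / (1 - ρ))`, and `P` carries this bound back to `ξ`.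
-/

open Matrix Set Bornology

theorem apply_iterate_le_max_div {α : Type*} (T : α → α) (V : α → ℝ) {ρ c : ℝ}
    (hρ₀ : 0 ≤ ρ) (hρ₁ : ρ < 1) (hT : ∀ x, V (T x) ≤ ρ * V x + c) (x : α) (n : ℕ) :
    V (T^[n] x) ≤ max (V x) (c / (1 - ρ)) := by
  induction n with
  | zero => exact le_max_left _ _
  | succ n ih =>
    have hc : c ≤ (1 - ρ) * max (V x) (c / (1 - ρ)) := by
      rw [← div_le_iff₀' (by linarith)]
      exact le_max_right _ _
    rw [Function.iterate_succ_apply']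
    nlinarith [hT (T^[n] x)]

theorem isBounded_range_iterate_of_norm_le {E F : Type*} [PseudoMetricSpace E]
    [SeminormedAddCommGroup F] {K : NNReal} {f : E → F} (hf : AntilipschitzWith K f)
    (T : E → E) {ρ c : ℝ} (hρ₀ : 0 ≤ ρ) (hρ₁ : ρ < 1) (hT : ∀ x, ‖f (T x)‖ ≤ ρ * ‖f x‖ + c)
    (x : E) : IsBounded (range fun n => T^[n] x) := by
  refine (hf.isBounded_preimage (Metric.isBounded_closedBall (x := 0)
    (r := max ‖f x‖ (c / (1 - ρ))))).subset ?_
  rintro _ ⟨n, rfl⟩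
  simpa using apply_iterate_le_max_div T (‖f ·‖) hρ₀ hρ₁ hT x n

theorem norm_diagonal_mulVec_le {ι 𝕜 : Type*} [Fintype ι] [DecidableEq ι] [SeminormedRing 𝕜]
    {d : ι → 𝕜} {ρ : ℝ} (hρ : 0 ≤ ρ) (hd : ∀ i, ‖d i‖ ≤ ρ) (v : ι → 𝕜) :
    ‖diagonal d *ᵥ v‖ ≤ ρ * ‖v‖ := by
  refine (pi_norm_le_iff_of_nonneg (by positivity)).2 fun i => ?_
  rw [mulVec_diagonal]
  exact (norm_mul_le _ _).trans (mul_le_mul (hd i) (norm_le_pi_norm v i) (norm_nonneg _) hρ)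

theorem Matrix.exp_smul_of_mul_eq_mul_diagonal {ι : Type*} [Fintype ι] [DecidableEq ι]
    {A P : Matrix ι ι ℝ} {d : ι → ℝ} (hP : IsUnit P) (hAP : A * P = P * diagonal d) (τ : ℝ) :
    NormedSpace.exp (τ • A) = P * diagonal (fun i => Real.exp (τ * d i)) * P⁻¹ := by
  have hA : A = P * diagonal d * P⁻¹ := by
    rw [← hAP, mul_assoc, mul_nonsing_inv _ ((isUnit_iff_isUnit_det P).1 hP), mul_one]
  rw [hA, ← smul_mul_assoc, ← mul_smul_comm, Matrix.exp_conj _ _ hP, ← diagonal_smul, exp_diagonal]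
  simp [Real.exp_eq_exp_ℝ, Pi.exp_def]

theorem Matrix.exists_antilipschitzWith_nonsing_inv_mulVec {ι : Type*} [Fintype ι] [DecidableEq ι]
    {P : Matrix ι ι ℝ} (hP : IsUnit P) : ∃ K, AntilipschitzWith K (P⁻¹ *ᵥ ·) := by
  let := hP.invertible
  let e := (toLinearEquiv' P this).symm.toContinuousLinearEquiv
  have he : ⇑e = (P⁻¹ *ᵥ ·) := by
    ext x : 1
    change toLin' (⅟P) x = _
    rw [toLin'_apply, invOf_eq_nonsing_inv]
  exact ⟨_, he ▸ e.antilipschitz⟩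

theorem isBounded_range_iterate_exp_smul_mulVec {ι : Type*} [Fintype ι] [DecidableEq ι]
    {A P : Matrix ι ι ℝ} {d : ι → ℝ} (hP : IsUnit P) (hAP : A * P = P * diagonal d)
    (hd : ∀ i, d i < 0) (B : ι → ℝ) {φ f : (ι → ℝ) → ℝ} {φ₁ C : ℝ} (hφ₁ : 0 < φ₁)
    (hφ : ∀ x, φ₁ ≤ φ x) (hf : ∀ x, |f x| ≤ C) (ξ : ι → ℝ) :
    IsBounded (range fun n => (fun x => NormedSpace.exp (φ x • A) *ᵥ (x + f x • B))^[n] ξ) := by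
  set ρ : NNReal := Finset.univ.sup fun i => (Real.exp (φ₁ * d i)).toNNReal
  have hρ : (ρ : ℝ) < 1 := by
    rw [NNReal.coe_lt_one, Finset.sup_lt_iff zero_lt_one]
    intro i _
    rw [Real.toNNReal_lt_one, Real.exp_lt_one_iff]
    exact mul_neg_of_pos_of_neg hφ₁ (hd i)
  have hexp_le : ∀ x i, ‖Real.exp (φ x * d i)‖ ≤ ρ := fun x i => calc
    ‖Real.exp (φ x * d i)‖ = Real.exp (φ x * d i) := Real.norm_of_nonneg (Real.exp_pos _).le
    _ ≤ Real.exp (φ₁ * d i) := Real.exp_le_exp.2 (mul_le_mul_of_nonpos_right (hφ x) (hd i).le)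
    _ ≤ (Real.exp (φ₁ * d i)).toNNReal := Real.le_coe_toNNReal _
    _ ≤ ρ := NNReal.coe_le_coe.2 (Finset.le_sup (f := fun i => (Real.exp (φ₁ * d i)).toNNReal)
      (Finset.mem_univ i))
  have hPinv : P⁻¹ * P = 1 := nonsing_inv_mul P ((isUnit_iff_isUnit_det P).1 hP)
  have hstep : ∀ x, P⁻¹ *ᵥ (NormedSpace.exp (φ x • A) *ᵥ (x + f x • B)) =
      diagonal (fun i => Real.exp (φ x * d i)) *ᵥ (P⁻¹ *ᵥ x + f x • (P⁻¹ *ᵥ B)) := fun x => by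
    rw [Matrix.exp_smul_of_mul_eq_mul_diagonal hP hAP, mulVec_mulVec, ← mul_assoc, ← mul_assoc,
      hPinv, one_mul, ← mulVec_mulVec, mulVec_add, mulVec_smul]
  obtain ⟨K, hK⟩ := Matrix.exists_antilipschitzWith_nonsing_inv_mulVec hP
  refine isBounded_range_iterate_of_norm_le hK _ ρ.coe_nonneg hρ (c := ρ * (C * ‖P⁻¹ *ᵥ B‖))
    (fun x => ?_) ξ
  rw [hstep]
  refine (norm_diagonal_mulVec_le ρ.coe_nonneg (hexp_le x) _).trans ?_
  rw [← mul_add]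
  gcongr
  refine (norm_add_le _ _).trans (add_le_add_right ?_ _)
  rw [norm_smul, Real.norm_eq_abs]
  exact mul_le_mul_of_nonneg_right (hf x) (norm_nonneg _)

noncomputable def goodwinEigenvectors (a₁ a₂ a₃ g₁ g₂ : ℝ) : Matrix (Fin 3) (Fin 3) ℝ :=
  !![1, 0, 0;
     g₁ / (a₂ - a₁), 1, 0;
     g₁ * g₂ / ((a₂ - a₁) * (a₃ - a₁)), g₂ / (a₃ - a₂), 1]

theorem det_goodwinEigenvectors (a₁ a₂ a₃ g₁ g₂ : ℝ) :
    (goodwinEigenvectors a₁ a₂ a₃ g₁ g₂).det = 1 := by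
  simp [goodwinEigenvectors, det_fin_three]

theorem goodwin_mul_eigenvectors {a₁ a₂ a₃ : ℝ} (h12 : a₁ ≠ a₂) (h13 : a₁ ≠ a₃) (h23 : a₂ ≠ a₃)
    (g₁ g₂ : ℝ) :
    !![-a₁, 0, 0; g₁, -a₂, 0; 0, g₂, -a₃] * goodwinEigenvectors a₁ a₂ a₃ g₁ g₂ =
      goodwinEigenvectors a₁ a₂ a₃ g₁ g₂ * diagonal ![-a₁, -a₂, -a₃] := by
  have h21 : a₂ - a₁ ≠ 0 := sub_ne_zero.2 h12.symm
  have h31 : a₃ - a₁ ≠ 0 := sub_ne_zero.2 h13.symm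
  have h32 : a₃ - a₂ ≠ 0 := sub_ne_zero.2 h23.symm
  ext i j
  fin_cases i <;> fin_cases j <;>
    simp [goodwinEigenvectors, mul_apply, Fin.sum_univ_three] <;> field_simp <;> ring

theorem igo_orbits_bounded_general (a₁ a₂ a₃ g₁ g₂ : ℝ)
    (ha₁ : 0 < a₁) (ha₂ : 0 < a₂) (ha₃ : 0 < a₃)
    (h12 : a₁ ≠ a₂) (h13 : a₁ ≠ a₃) (h23 : a₂ ≠ a₃)
    (A : Matrix (Fin 3) (Fin 3) ℝ)
    (hA : A = !![-a₁, 0, 0; g₁, -a₂, 0; 0, g₂, -a₃])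
    (B : Fin 3 → ℝ)
    (Φ F : ℝ → ℝ) (Φ₁ Φ₂ F₁ F₂ : ℝ)
    (hΦ₁ : 0 < Φ₁) (hΦbound : ∀ z : ℝ, Φ₁ ≤ Φ z ∧ Φ z ≤ Φ₂)
    (hFbound : ∀ z : ℝ, F₁ ≤ F z ∧ F z ≤ F₂)
    (Q : (Fin 3 → ℝ) → (Fin 3 → ℝ))
    (hQ : Q = fun ξ => (NormedSpace.exp (Φ (ξ 2) • A)).mulVec (ξ + F (ξ 2) • B))
    (ξ : Fin 3 → ℝ) :
    Bornology.IsBounded (Set.range fun n : ℕ => Q^[n] ξ) := by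
  subst hA hQ
  have hP : IsUnit (goodwinEigenvectors a₁ a₂ a₃ g₁ g₂) :=
    (isUnit_iff_isUnit_det _).2 (by simp [det_goodwinEigenvectors])
  have hd : ∀ i, ![-a₁, -a₂, -a₃] i < 0 := by simp [Fin.forall_fin_succ, ha₁, ha₂, ha₃]
  exact isBounded_range_iterate_exp_smul_mulVec hP (goodwin_mul_eigenvectors h12 h13 h23 g₁ g₂)
    hd B hΦ₁ (fun x => (hΦbound (x 2)).1)
    (fun x => abs_le_max_abs_abs (hFbound (x 2)).1 (hFbound (x 2)).2) ξ

/-- Boundedness of solutions of the impulsive Goodwin's oscillator: with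
`A = [[−a₁,0,0],[g₁,−a₂,0],[0,g₂,−a₃]]` (pairwise distinct positive `a₁,a₂,a₃`,
`g₁,g₂ > 0`), `B = (1,0,0)ᵀ`, `C·ξ = ξ 2`, `Φ` bounded between positive constants, `F`
bounded between positive constants, and `Q(ξ) = exp(Φ(C·ξ)·A)(ξ + F(C·ξ)·B)`, the forward
orbit `{Qⁿ(ξ) : n ∈ ℕ}` of every `ξ ∈ ℝ³` is a bounded subset of `ℝ³`. -/
theorem igo_orbits_bounded (a₁ a₂ a₃ g₁ g₂ : ℝ)
    (ha₁ : 0 < a₁) (ha₂ : 0 < a₂) (ha₃ : 0 < a₃)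
    (h12 : a₁ ≠ a₂) (h13 : a₁ ≠ a₃) (h23 : a₂ ≠ a₃)
    (hg₁ : 0 < g₁) (hg₂ : 0 < g₂)
    (A : Matrix (Fin 3) (Fin 3) ℝ)
    (hA : A = !![-a₁, 0, 0; g₁, -a₂, 0; 0, g₂, -a₃])
    (B : Fin 3 → ℝ) (hB : B = ![1, 0, 0])
    (Φ F : ℝ → ℝ) (Φ₁ Φ₂ F₁ F₂ : ℝ)
    (hΦ₁ : 0 < Φ₁) (hΦ₁₂ : Φ₁ ≤ Φ₂) (hΦbound : ∀ z : ℝ, Φ₁ ≤ Φ z ∧ Φ z ≤ Φ₂)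
    (hF₁ : 0 < F₁) (hF₁₂ : F₁ ≤ F₂) (hFbound : ∀ z : ℝ, F₁ ≤ F z ∧ F z ≤ F₂)
    (Q : (Fin 3 → ℝ) → (Fin 3 → ℝ))
    (hQ : Q = fun ξ => (NormedSpace.exp (Φ (ξ 2) • A)).mulVec (ξ + F (ξ 2) • B))
    (ξ : Fin 3 → ℝ) :
    Bornology.IsBounded (Set.range fun n : ℕ => Q^[n] ξ) :=
  igo_orbits_bounded_general a₁ a₂ a₃ g₁ g₂ ha₁ ha₂ ha₃ h12 h13 h23 A hA B Φ F Φ₁ Φ₂ F₁ F₂ hΦ₁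
    hΦbound hFbound Q hQ ξ
end
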